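/- arXiv:math/0205024 — 9 statements merged into one kernel-verified Lean document; each statement's English description precedes it below -/
import Mathlib

section
/- The number of standard Young tableaux with entries {1,...,2m} whose shape is of the form (2^{2p}, 1^{2q}) for some nonnegative integers p, q with 4p + 2q = 2m equals C(2m-1, m). -/
/-- Tableaux are represented as lists of rows of positive integers.
`IsSSYT T` : rows weakly increasing, columns strictly increasing,
row lengths weakly decreasing, no empty rows (English notation). -/
def IsSSYT (T : List (List ℕ)) : Prop :=
  (∀ r ∈ T, List.Pairwise (· ≤ ·) r) ∧
  (∀ (i j a b : ℕ), (T.getD i [])[j]? = some a → (T.getD (i+1) [])[j]? = some b → a < b) ∧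
  (∀ i, (T.getD (i+1) []).length ≤ (T.getD i []).length) ∧
  [] ∉ T

/-- Schensted row insertion.  Returns the new tableau together with the
(0-based) index of the row in which a new box was added. -/
def rinsert : List (List ℕ) → ℕ → List (List ℕ) × ℕ
  | [], x => ([[x]], 0)
  | r :: rs, x =>
    match r.findIdx? (fun t => x < t) with
    | none => ((r ++ [x]) :: rs, 0)
    | some j =>
      let y := r.getD j 0
      let p := rinsert rs y
      ((r.set j x) :: p.1, p.2 + 1)

/-- Reverse bumping through the rows above (given in reversed order). -/
def revBump : List (List ℕ) → ℕ → List (List ℕ) × ℕ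
  | [], x => ([], x)
  | r :: rs, x =>
    let k := (r.takeWhile (· < x)).length
    if k = 0 then (r :: rs, x)
    else
      let y := r.getD (k - 1) 0
      let p := revBump rs y
      ((r.set (k - 1) x) :: p.1, p.2)

/-- Schensted deletion: remove the last box of row `i` and reverse-bump,
returning the new tableau and the ejected entry. -/
def schDelete (T : List (List ℕ)) (i : ℕ) : List (List ℕ) × ℕ :=
  let r := T.getD i []
  let x := r.getLastD 0
  let r' := r.dropLast
  let p := revBump (T.take i).reverse x
  (p.1.reverse ++ (if r' = [] then ([] : List (List ℕ)) else [r']) ++ T.drop (i + 1), p.2)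

/-- One step of `Carray2Dtableau`: insert `b` and append `a` at the end of
the next row. -/
def c2dStep (T : List (List ℕ)) (p : ℕ × ℕ) : List (List ℕ) :=
  let q := rinsert T p.2
  if q.2 + 1 < q.1.length then q.1.set (q.2 + 1) ((q.1.getD (q.2 + 1) []) ++ [p.1])
  else q.1 ++ [[p.1]]

/-- The map `Carray2Dtableau` from c-arrays (lists of columns `(aᵢ, bᵢ)`) to
tableaux of double shape. -/
def c2d (S : List (ℕ × ℕ)) : List (List ℕ) := S.foldl c2dStep []

/-- One step of `Dtableau2Carray`: extract the maximal entry `x` (occurrence of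
maximal column, at the end of row `i`), apply `schDelete` at row `i` ejecting `y`,
and remove the corresponding entry of row `i-1`. -/
def d2cStep (T : List (List ℕ)) : List (List ℕ) × (ℕ × ℕ) :=
  let x := T.flatten.foldr max 0
  let cand := (List.range T.length).filter (fun i => (T.getD i []).getLastD 0 = x)
  let i := cand.foldl (fun acc i =>
      if (T.getD acc []).length < (T.getD i []).length then i else acc) 0
  let j := (T.getD i []).length - 1
  let p := schDelete T i
  let T2 := p.1.set (i - 1) ((p.1.getD (i - 1) []).eraseIdx j)
  (T2.filter (fun r => r ≠ []), (x, p.2))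

def d2cAux : ℕ → List (List ℕ) → List (ℕ × ℕ)
  | 0, _ => []
  | n + 1, T =>
    if T = [] then []
    else
      let p := d2cStep T
      d2cAux n p.1 ++ [p.2]

/-- The map `Dtableau2Carray`. -/
def d2c (T : List (List ℕ)) : List (ℕ × ℕ) := d2cAux T.flatten.length T

/-- Content of a two-rowed array: multiplicity of each value among all entries. -/
def cntA (S : List (ℕ × ℕ)) (v : ℕ) : ℕ := (S.map Prod.fst ++ S.map Prod.snd).count v

/-- Content of a tableau. -/
def cntT (T : List (List ℕ)) (v : ℕ) : ℕ := T.flatten.count v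

/-- A c-array: each column `(aᵢ, bᵢ)` satisfies `bᵢ < aᵢ` and the columns are
weakly increasing in the lexicographic order. -/
def IsCArray (S : List (ℕ × ℕ)) : Prop :=
  (∀ p ∈ S, p.2 < p.1) ∧
  List.Chain' (fun p q : ℕ × ℕ => p.1 < q.1 ∨ (p.1 = q.1 ∧ p.2 ≤ q.2)) S

/-- Normality: every value occurs at most twice, and the bottom row contains no
weakly increasing subsequence of length 3. -/
def IsNormal (S : List (ℕ × ℕ)) : Prop :=
  (∀ v, cntA S v ≤ 2) ∧
  ∀ t : List ℕ, t.Sublist (S.map Prod.snd) → t.Pairwise (· ≤ ·) → t.length ≤ 2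

/-- A double shape: each row length is repeated an even number of times. -/
def IsDoubleShape (T : List (List ℕ)) : Prop :=
  ∃ L : List ℕ, T.map List.length = L.flatMap (fun a => [a, a])

/-- A standard Young tableau with entries `{1, …, n}`. -/
def IsStandard (T : List (List ℕ)) (n : ℕ) : Prop :=
  IsSSYT T ∧ (∀ r ∈ T, List.Pairwise (· < ·) r) ∧ T.flatten.Perm (List.range' 1 n)

/-!
A standard tableau of shape `(2^k, 1^c)` is determined by the set `S` of entries of its second
column: its columns are the increasing lists of `{1, …, n} \ S` and of `S`, and the tableau
conditions say that the `i`-th entry of the second column exceeds the `i`-th entry of the first,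
a ballot condition on `S`. Adjoining the entry `n + 1` to either column shows that the number of
such `S` with `#S = k + 1` is the ballot number `C(n, k+1) - C(n, k)`. For `n = 2m` and even `k`
these differences telescope by Pascal's rule, `C(2m, k) - C(2m, k-1) = C(2m-1, k) - C(2m-1, k-2)`,
so the sum over even `k ≤ m` is `C(2m-1, 2⌊m/2⌋) = C(2m-1, m)`.
-/

open Finset

namespace List

variable {α : Type*}

/-- The tableau with columns `c₁` and `c₂`; the last clause, where the second column is the longer
one, is junk. -/
def twoColumn : List α → List α → List (List α)
  | a :: c₁, b :: c₂ => [a, b] :: twoColumn c₁ c₂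
  | c₁, [] => c₁.map ([·])
  | [], _ :: _ => []

variable {c₁ c₂ : List α}

theorem getElem?_getD_twoColumn (h : c₂.length ≤ c₁.length) (i j : ℕ) :
    ((twoColumn c₁ c₂).getD i [])[j]? = ([c₁, c₂].getD j [])[i]? := by
  induction c₁, c₂ using twoColumn.induct generalizing i with
  | case1 a c₁ b c₂ ih =>
    rcases i with _ | i
    · rcases j with _ | _ | j <;> simp [twoColumn]
    · rcases j with _ | _ | j <;> simpa [twoColumn] using ih (by simpa using h) i
  | case2 c₁ =>
    rcases j with _ | _ | j <;> cases h : c₁[i]? <;> simp_all [twoColumn, getD_eq_getElem?_getD]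
  | case3 b c₂ => simp at h

theorem twoColumn_inj {d₁ d₂ : List α} (hc : c₂.length ≤ c₁.length) (hd : d₂.length ≤ d₁.length)
    (h : twoColumn c₁ c₂ = twoColumn d₁ d₂) : c₁ = d₁ ∧ c₂ = d₂ := by
  have hcol (i j : ℕ) : ([c₁, c₂].getD j [])[i]? = ([d₁, d₂].getD j [])[i]? := by
    rw [← getElem?_getD_twoColumn hc, ← getElem?_getD_twoColumn hd, h]
  exact ⟨ext_getElem? fun i => hcol i 0, ext_getElem? fun i => hcol i 1⟩

theorem map_length_twoColumn (h : c₂.length ≤ c₁.length) :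
    (twoColumn c₁ c₂).map length =
      replicate c₂.length 2 ++ replicate (c₁.length - c₂.length) 1 := by
  induction c₁, c₂ using twoColumn.induct with
  | case1 a c₁ b c₂ ih => simp [twoColumn, ih (by simpa using h), replicate_succ]
  | case2 c₁ => simp [twoColumn, Function.comp_def]
  | case3 b c₂ => simp at h

theorem exists_eq_twoColumn {T : List (List α)} {b c : ℕ}
    (h : T.map length = replicate b 2 ++ replicate c 1) :
    ∃ c₁ c₂, c₂.length = b ∧ c₁.length = b + c ∧ T = twoColumn c₁ c₂ := by
  induction T generalizing b c with
  | nil => exact ⟨[], [], by simp_all [twoColumn]⟩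
  | cons r T ih =>
    rcases b with _ | b
    · rcases c with _ | c
      · simp at h
      obtain ⟨hr, hT⟩ : r.length = 1 ∧ T.map length = replicate 0 2 ++ replicate c 1 := by
        simpa [replicate_succ] using h
      obtain ⟨c₁, c₂, hc₂, hc₁, rfl⟩ := ih hT
      obtain rfl := length_eq_zero_iff.mp hc₂
      obtain ⟨x, rfl⟩ := length_eq_one_iff.mp hr
      exact ⟨x :: c₁, [], rfl, by simp [hc₁], by simp [twoColumn]⟩
    · obtain ⟨hr, hT⟩ : r.length = 2 ∧ T.map length = replicate b 2 ++ replicate c 1 := by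
        simpa [replicate_succ] using h
      obtain ⟨c₁, c₂, hc₂, hc₁, rfl⟩ := ih hT
      obtain ⟨x, y, rfl⟩ := length_eq_two.mp hr
      exact ⟨x :: c₁, y :: c₂, by simp [hc₂], by simp [hc₁]; omega, rfl⟩

theorem forall_mem_twoColumn_pairwise_iff {R : α → α → Prop} :
    (∀ r ∈ twoColumn c₁ c₂, r.Pairwise R) ↔
      ∀ (i : ℕ) a b, c₁[i]? = some a → c₂[i]? = some b → R a b := by
  induction c₁, c₂ using twoColumn.induct with
  | case1 a c₁ b c₂ ih =>
    simp only [twoColumn, mem_cons, forall_eq_or_imp, ih]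
    constructor
    · rintro ⟨hab, h⟩ (_ | i)
      · simpa using hab
      · exact h i
    · intro h
      exact ⟨by simpa using h 0 a b rfl rfl, fun i => h (i + 1)⟩
  | case2 c₁ => simp [twoColumn]
  | case3 b c₂ => simp [twoColumn]

theorem nil_not_mem_twoColumn : [] ∉ twoColumn c₁ c₂ := by
  induction c₁, c₂ using twoColumn.induct <;> simp_all [twoColumn]

theorem flatten_twoColumn_perm (h : c₂.length ≤ c₁.length) :
    (twoColumn c₁ c₂).flatten.Perm (c₁ ++ c₂) := by
  induction c₁, c₂ using twoColumn.induct with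
  | case1 a c₁ b c₂ ih =>
    simpa [twoColumn] using (((ih (by simpa using h)).cons b).trans perm_middle.symm).cons a
  | case2 c₁ => simp [twoColumn, ← flatMap_def]
  | case3 b c₂ => simp at h

theorem length_getD_succ_twoColumn_le (h : c₂.length ≤ c₁.length) (i : ℕ) :
    ((twoColumn c₁ c₂).getD (i + 1) []).length ≤ ((twoColumn c₁ c₂).getD i []).length := by
  by_contra! hlt
  have h₁ := getElem?_getD_twoColumn h (i + 1) ((twoColumn c₁ c₂).getD i []).length
  have h₂ := getElem?_getD_twoColumn h i ((twoColumn c₁ c₂).getD i []).length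
  rw [getElem?_eq_getElem hlt] at h₁
  rw [getElem?_eq_none le_rfl, eq_comm, getElem?_eq_none_iff] at h₂
  rw [getElem?_eq_none (by omega)] at h₁
  exact Option.some_ne_none _ h₁

theorem isChain_iff_getElem? {R : α → α → Prop} {l : List α} :
    l.IsChain R ↔ ∀ (i : ℕ) a b, l[i]? = some a → l[i + 1]? = some b → R a b := by
  rw [isChain_iff_getElem]
  constructor
  · intro hl i a b ha hb
    obtain ⟨-, rfl⟩ := getElem?_eq_some_iff.mp ha
    obtain ⟨hi, rfl⟩ := getElem?_eq_some_iff.mp hb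
    exact hl i hi
  · intro hl i hi
    exact hl i _ _ (getElem?_eq_getElem _) (getElem?_eq_getElem hi)

end List

/-- For complementary subsets of `{1, …, n}` listed increasingly, this is the ballot condition:
every initial segment `{1, …, t}` meets `c₁` at least as often as `c₂`. -/
def BallotPair {α : Type*} [LT α] (c₁ c₂ : List α) : Prop :=
  c₂.length ≤ c₁.length ∧ ∀ (i : ℕ) a b, c₁[i]? = some a → c₂[i]? = some b → a < b

theorem isStandard_twoColumn_iff {c₁ c₂ : List ℕ} {n : ℕ} (h : c₂.length ≤ c₁.length) :
    IsStandard (c₁.twoColumn c₂) n ↔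
      c₁.Pairwise (· < ·) ∧ c₂.Pairwise (· < ·) ∧ BallotPair c₁ c₂ ∧
        (c₁ ++ c₂).Perm (List.range' 1 n) := by
  have hcols : (∀ (i j a b : ℕ), ((c₁.twoColumn c₂).getD i [])[j]? = some a →
      ((c₁.twoColumn c₂).getD (i + 1) [])[j]? = some b → a < b) ↔
      c₁.Pairwise (· < ·) ∧ c₂.Pairwise (· < ·) := by
    simp only [List.getElem?_getD_twoColumn h, ← List.isChain_iff_pairwise]
    rw [forall_comm]
    simp only [List.isChain_iff_getElem?]
    constructor
    · exact fun hc => ⟨hc 0, hc 1⟩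
    · rintro ⟨h₀, h₁⟩ (_ | _ | j)
      exacts [h₀, h₁, by simp]
  have hperm := List.flatten_twoColumn_perm h
  constructor
  · rintro ⟨⟨-, hcol, -, -⟩, hrow, hflat⟩
    exact ⟨(hcols.mp hcol).1, (hcols.mp hcol).2,
      ⟨h, List.forall_mem_twoColumn_pairwise_iff.mp hrow⟩, hperm.symm.trans hflat⟩
  · rintro ⟨h₁, h₂, ⟨-, hrow⟩, hc⟩
    have hrow' := List.forall_mem_twoColumn_pairwise_iff.mpr hrow
    exact ⟨⟨fun r hr => (hrow' r hr).imp le_of_lt, hcols.mpr ⟨h₁, h₂⟩,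
      List.length_getD_succ_twoColumn_le h, List.nil_not_mem_twoColumn⟩, hrow', hperm.trans hc⟩

section BallotPair

variable {α : Type*} [Preorder α] {c₁ c₂ : List α} {x : α}

theorem ballotPair_append_left (hx : ∀ b ∈ c₂, b ≤ x) :
    BallotPair (c₁ ++ [x]) c₂ ↔ BallotPair c₁ c₂ := by
  constructor
  · rintro ⟨hlen, hrow⟩
    have hlen' : c₂.length ≤ c₁.length := by
      by_contra! hlt
      have hb := List.getElem?_eq_getElem (l := c₂) (i := c₁.length) (by simp at hlen; omega)
      exact (hrow _ x _ (by simp) hb).not_ge (hx _ (List.getElem_mem _))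
    refine ⟨hlen', fun i a b ha hb => hrow i a b ?_ hb⟩
    rwa [List.getElem?_append_left ((List.getElem?_eq_some_iff.mp hb).1.trans_le hlen')]
  · rintro ⟨hlen, hrow⟩
    refine ⟨by simp; omega, fun i a b ha hb => hrow i a b ?_ hb⟩
    rwa [List.getElem?_append_left ((List.getElem?_eq_some_iff.mp hb).1.trans_le hlen)] at ha

theorem ballotPair_append_right (hx : ∀ a ∈ c₁, a < x) :
    BallotPair c₁ (c₂ ++ [x]) ↔ BallotPair c₁ c₂ ∧ c₂.length < c₁.length := by
  constructor
  · rintro ⟨hlen, hrow⟩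
    simp only [List.length_append, List.length_singleton] at hlen
    refine ⟨⟨by omega, fun i a b ha hb => hrow i a b ha ?_⟩, by omega⟩
    rwa [List.getElem?_append_left (List.getElem?_eq_some_iff.mp hb).1]
  · rintro ⟨⟨-, hrow⟩, hlen⟩
    refine ⟨by simp; omega, fun i a b ha hb => ?_⟩
    rw [List.getElem?_append] at hb
    split_ifs at hb with hi
    · exact hrow i a b ha hb
    · obtain rfl : b = x := by simpa using List.mem_of_getElem? hb
      exact hx a (List.mem_of_getElem? ha)

end BallotPair

theorem Finset.sort_insert_of_forall_lt {α : Type*} [LinearOrder α] {s : Finset α} {a : α}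
    (h : ∀ b ∈ s, b < a) : (insert a s).sort = s.sort ++ [a] := by
  have hnd : (s.sort ++ [a]).Nodup :=
    (s.sort_nodup _).append (List.nodup_singleton a)
      (by simpa using fun hb => (h a hb).false)
  have hsorted : (s.sort ++ [a]).Pairwise (· ≤ ·) :=
    List.pairwise_append.mpr ⟨s.pairwise_sort _, by simp,
      fun b hb c hc => by simp at hb hc; exact hc ▸ (h b hb).le⟩
  rw [← (List.toFinset_sort (· ≤ ·) hnd).mpr hsorted]
  congr 1
  ext
  simp

def IsBallot (n : ℕ) (S : Finset ℕ) : Prop :=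
  BallotPair (Icc 1 n \ S).sort S.sort

open Classical in
noncomputable def ballotSets (n k : ℕ) : Finset (Finset ℕ) :=
  ((Icc 1 n).powersetCard k).filter (IsBallot n)

section Counting

variable {n k : ℕ} {S : Finset ℕ}

theorem isBallot_succ (hS : S ⊆ Icc 1 n) : IsBallot (n + 1) S ↔ IsBallot n S := by
  rw [IsBallot, IsBallot, ← insert_Icc_right_eq_Icc_add_one (by omega),
    insert_sdiff_of_notMem _ fun h => by simpa using hS h, sort_insert_of_forall_lt (by simp; omega),
    ballotPair_append_left fun b hb => by have := hS (mem_sort _ |>.mp hb); simp at this; omega]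

theorem isBallot_succ_insert (hS : S ⊆ Icc 1 n) :
    IsBallot (n + 1) (insert (n + 1) S) ↔ IsBallot n S ∧ 2 * #S < n := by
  have hcard : #(Icc 1 n \ S) = n - #S := by simp [card_sdiff_of_subset hS]
  rw [IsBallot, IsBallot, ← insert_Icc_right_eq_Icc_add_one (by omega), insert_sdiff_insert,
    sdiff_insert_of_notMem (by simp),
    sort_insert_of_forall_lt fun b hb => by have := hS hb; simp at this; omega,
    ballotPair_append_right fun a ha => by simp at ha; omega, length_sort, length_sort, hcard]
  exact and_congr_right fun _ => by omega

theorem mem_ballotSets : S ∈ ballotSets n k ↔ S ⊆ Icc 1 n ∧ #S = k ∧ IsBallot n S := by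
  simp [ballotSets, and_assoc]

theorem card_ballotSets_zero : #(ballotSets n 0) = 1 := by
  rw [card_eq_one]
  refine ⟨∅, eq_singleton_iff_unique_mem.mpr ⟨?_, fun S hS => ?_⟩⟩
  · exact mem_ballotSets.mpr ⟨empty_subset _, rfl, by simp [IsBallot, BallotPair]⟩
  · exact card_eq_zero.mp (mem_ballotSets.mp hS).2.1

theorem card_ballotSets_eq_zero (h : n < 2 * k) : #(ballotSets n k) = 0 := by
  refine card_eq_zero.mpr (eq_empty_of_forall_notMem fun S hS => ?_)
  obtain ⟨hsub, rfl, hlen, -⟩ := mem_ballotSets.mp hS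
  simp [card_sdiff_of_subset hsub] at hlen
  omega

theorem card_ballotSets_succ_succ :
    #(ballotSets (n + 1) (k + 1)) =
      #(ballotSets n (k + 1)) + if 2 * k < n then #(ballotSets n k) else 0 := by
  classical
  have hnew : n + 1 ∉ Icc 1 n := by simp
  have hkeep : ((Icc 1 n).powersetCard (k + 1)).filter (IsBallot (n + 1)) =
      ballotSets n (k + 1) :=
    filter_congr fun S hS => isBallot_succ (mem_powersetCard.mp hS).1
  have hadd : ((Icc 1 n).powersetCard k).filter (fun S => IsBallot (n + 1) (insert (n + 1) S)) =
      if 2 * k < n then ballotSets n k else ∅ := by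
    split_ifs with hk
    · refine filter_congr fun S hS => ?_
      rw [mem_powersetCard] at hS
      simp [isBallot_succ_insert hS.1, hS.2, hk]
    · refine filter_eq_empty_iff.mpr fun S hS => ?_
      rw [mem_powersetCard] at hS
      simp [isBallot_succ_insert hS.1, hS.2, hk]
  rw [ballotSets, ← insert_Icc_right_eq_Icc_add_one (by omega), powersetCard_succ_insert hnew,
    filter_union, filter_image, card_union_of_disjoint, card_image_of_injOn, hkeep, hadd]
  · split_ifs <;> simp
  · intro S hS S' hS' h
    have hS := (mem_powersetCard.mp (mem_filter.mp hS).1).1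
    have hS' := (mem_powersetCard.mp (mem_filter.mp hS').1).1
    rw [← erase_insert fun h => hnew (hS h), h, erase_insert fun h => hnew (hS' h)]
  · refine disjoint_left.mpr fun S h₁ h₂ => hnew ?_
    obtain ⟨S', -, rfl⟩ := mem_image.mp h₂
    exact (mem_powersetCard.mp (mem_filter.mp h₁).1).1 (mem_insert_self _ _)

theorem card_ballotSets_add_choose (h : 2 * k + 1 ≤ n) :
    #(ballotSets n (k + 1)) + n.choose k = n.choose (k + 1) := by
  induction n generalizing k with
  | zero => omega
  | succ n ih =>
    rw [card_ballotSets_succ_succ]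
    rcases k with _ | k
    · rcases Nat.eq_zero_or_pos n with rfl | hn
      · simp [card_ballotSets_eq_zero]
      · have := ih (k := 0) (by omega)
        simp only [zero_add, Nat.choose_zero_right, Nat.choose_one_right] at this ⊢
        rw [card_ballotSets_zero, if_pos (by omega)]
        omega
    · rcases (show n = 2 * k + 2 ∨ 2 * k + 3 ≤ n by omega) with rfl | hn
      · rw [card_ballotSets_eq_zero (by omega), if_neg (by omega), zero_add, zero_add]
        exact Nat.choose_symm_of_eq_add (by omega)
      · rw [if_pos (by omega), Nat.choose_succ_succ', Nat.choose_succ_succ']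
        have := ih (k := k + 1) (by omega)
        have := ih (k := k) (by omega)
        omega

theorem sum_card_ballotSets_even {J : ℕ} (h : 4 * J ≤ n + 1) :
    ∑ p ∈ range (J + 1), #(ballotSets n (2 * p)) = (n - 1).choose (2 * J) := by
  induction J with
  | zero => simp [card_ballotSets_zero]
  | succ J ih =>
    obtain ⟨N, rfl⟩ : ∃ N, n = N + 1 := ⟨n - 1, by omega⟩
    have hstep := card_ballotSets_add_choose (n := N + 1) (k := 2 * J + 1) (by omega)
    rw [Nat.choose_succ_succ', Nat.choose_succ_succ'] at hstep
    rw [sum_range_succ, ih (by omega), Nat.add_sub_cancel, show 2 * (J + 1) = 2 * J + 1 + 1 by ring]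
    omega

end Counting

section Tableaux

variable {n : ℕ}

theorem sort_sdiff_append_sort_perm {S : Finset ℕ} (hS : S ⊆ Icc 1 n) :
    ((Icc 1 n \ S).sort ++ S.sort).Perm (List.range' 1 n) := by
  refine List.perm_of_nodup_nodup_toFinset_eq
    ((sort_nodup _ _).append (sort_nodup _ _) ?_) (List.nodup_range' ..) ?_
  · simp [List.Disjoint]
  · ext x
    by_cases hx : x ∈ S
    · have := mem_Icc.mp (hS hx)
      simp [hx, List.mem_range'_1]
      omega
    · simp [hx, List.mem_range'_1]
      omega

theorem sort_Icc_sdiff_toFinset {c₁ c₂ : List ℕ} (h₁ : c₁.Pairwise (· < ·))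
    (hc : (c₁ ++ c₂).Perm (List.range' 1 n)) : (Icc 1 n \ c₂.toFinset).sort = c₁ := by
  have hnd : (c₁ ++ c₂).Nodup := hc.nodup_iff.mpr (List.nodup_range' ..)
  have hset : c₁.toFinset = Icc 1 n \ c₂.toFinset := by
    ext x
    have hmem := hc.mem_iff (a := x)
    have hdisj := List.disjoint_of_nodup_append hnd (a := x)
    simp only [List.mem_append, List.mem_range'_1] at hmem
    simp only [List.mem_toFinset, mem_sdiff, mem_Icc]
    constructor
    · intro hx
      have := hmem.mp (Or.inl hx)
      exact ⟨by omega, hdisj hx⟩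
    · rintro ⟨hx, hx₂⟩
      exact (hmem.mpr (by omega)).resolve_right hx₂
  rw [← hset]
  exact (List.toFinset_sort _ h₁.nodup).mpr (h₁.imp le_of_lt)

def tableauOf (n : ℕ) (S : Finset ℕ) : List (List ℕ) :=
  (Icc 1 n \ S).sort.twoColumn S.sort

theorem mem_image_tableauOf_iff {k c : ℕ} (h : 2 * k + c = n) {T : List (List ℕ)} :
    T ∈ (ballotSets n k).image (tableauOf n) ↔
      IsStandard T n ∧ T.map List.length = List.replicate k 2 ++ List.replicate c 1 := by
  constructor
  · intro hT
    obtain ⟨S, hS, rfl⟩ := mem_image.mp hT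
    obtain ⟨hsub, rfl, hball⟩ := mem_ballotSets.mp hS
    refine ⟨(isStandard_twoColumn_iff hball.1).mpr ⟨(sortedLT_sort _).pairwise,
      (sortedLT_sort _).pairwise, hball, sort_sdiff_append_sort_perm hsub⟩, ?_⟩
    rw [tableauOf, List.map_length_twoColumn hball.1]
    simp [card_sdiff_of_subset hsub]
    omega
  · rintro ⟨hT, hshape⟩
    obtain ⟨c₁, c₂, hc₂, hc₁, rfl⟩ := List.exists_eq_twoColumn hshape
    obtain ⟨h₁, h₂, hball, hperm⟩ := (isStandard_twoColumn_iff (by omega)).mp hT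
    have hsort₁ := sort_Icc_sdiff_toFinset h₁ hperm
    have hsort₂ : c₂.toFinset.sort = c₂ := (List.toFinset_sort _ h₂.nodup).mpr (h₂.imp le_of_lt)
    refine mem_image.mpr ⟨c₂.toFinset, mem_ballotSets.mpr ⟨fun x hx => ?_, ?_, ?_⟩, ?_⟩
    · have := hperm.subset (List.mem_append_right _ (List.mem_toFinset.mp hx))
      simp only [List.mem_range'_1] at this
      exact mem_Icc.mpr (by omega)
    · rw [List.toFinset_card_of_nodup h₂.nodup, hc₂]
    · rwa [IsBallot, hsort₁, hsort₂]
    · rw [tableauOf, hsort₁, hsort₂]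

theorem injOn_tableauOf : Set.InjOn (tableauOf n) {S | IsBallot n S} := by
  intro S hS S' hS' h
  have := (List.twoColumn_inj hS.1 hS'.1 h).2
  rw [← sort_toFinset S (· ≤ ·), this, sort_toFinset]

end Tableaux

theorem card_biUnion_ballotSets_even (m : ℕ) :
    #((range (m / 2 + 1)).biUnion fun p => ballotSets (2 * m) (2 * p)) = (2 * m - 1).choose m := by
  rw [card_biUnion, sum_card_ballotSets_even (by omega)]
  · rcases Nat.even_or_odd m with ⟨r, rfl⟩ | ⟨r, rfl⟩
    · congr 1
      omega
    · exact Nat.choose_symm_of_eq_add (by omega)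
  · intro p _ p' _ hpp'
    refine disjoint_left.mpr fun S hS hS' => hpp' ?_
    have := (mem_ballotSets.mp hS).2.1.symm.trans (mem_ballotSets.mp hS').2.1
    omega

/-- the number of standard Young tableaux with entries `{1, …, 2m}`
of shape `(2^{2p}, 1^{2q})` for some `p, q` with `4p + 2q = 2m` is `C(2m-1, m)`. -/
theorem count_standard_double_shapes (m : ℕ) :
    Nat.card {T : List (List ℕ) // IsStandard T (2 * m) ∧ ∃ p q : ℕ,
      4 * p + 2 * q = 2 * m ∧
      T.map List.length = List.replicate (2 * p) 2 ++ List.replicate (2 * q) 1} =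
    Nat.choose (2 * m - 1) m := by
  have hT : ∀ T, (IsStandard T (2 * m) ∧ ∃ p q : ℕ, 4 * p + 2 * q = 2 * m ∧
      T.map List.length = List.replicate (2 * p) 2 ++ List.replicate (2 * q) 1) ↔
      T ∈ (range (m / 2 + 1)).biUnion fun p =>
        (ballotSets (2 * m) (2 * p)).image (tableauOf (2 * m)) := by
    intro T
    simp only [mem_biUnion, mem_range]
    constructor
    · rintro ⟨hT, p, q, hpq, hshape⟩
      exact ⟨p, by omega, (mem_image_tableauOf_iff (by omega)).mpr ⟨hT, hshape⟩⟩
    · rintro ⟨p, hp, hT⟩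
      obtain ⟨hT, hshape⟩ := (mem_image_tableauOf_iff (c := 2 * (m - 2 * p)) (by omega)).mp hT
      exact ⟨hT, p, m - 2 * p, by omega, hshape⟩
  rw [Nat.card_congr (Equiv.subtypeEquivRight hT), Nat.card_eq_finsetCard, ← biUnion_image,
    card_image_of_injOn, card_biUnion_ballotSets_even]
  refine injOn_tableauOf.mono fun S hS => ?_
  obtain ⟨p, -, hS⟩ := mem_biUnion.mp hS
  exact (mem_ballotSets.mp hS).2.2
end

section
/- In the matrix superalgebra M_{1,1}(E) over an infinite field F of characteristic ≠ 2, for any two supertraceless matrices w_1, w_2 ∈ W, the commutator [w_1, w_2] lies in the center of M_{1,1}(E); consequently [x_1, x_2, x_3] is a weak polynomial identity for the pair (M_{1,1}(E), W). -/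
noncomputable section

/-- The Grassmann algebra `E` over `F` on a countably infinite-dimensional space. -/
abbrev GrAlg (F : Type*) [Field F] := ExteriorAlgebra F (ℕ →₀ F)

/-- The even/odd part `E_i` of the Grassmann algebra. -/
def Epart (F : Type*) [Field F] (i : ZMod 2) : Submodule F (GrAlg F) :=
  CliffordAlgebra.evenOdd (0 : QuadraticForm F (ℕ →₀ F)) i

/-- The generators `e_n` of the Grassmann algebra. -/
def eGen (F : Type*) [Field F] (n : ℕ) : GrAlg F :=
  ExteriorAlgebra.ι F (Finsupp.single n 1)

/-- Membership in the superalgebra `M_{1,1}(E)`: diagonal entries even,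
off-diagonal entries odd. -/
def InM11 {F : Type*} [Field F] (A : Matrix (Fin 2) (Fin 2) (GrAlg F)) : Prop :=
  A 0 0 ∈ Epart F 0 ∧ A 1 1 ∈ Epart F 0 ∧ A 0 1 ∈ Epart F 1 ∧ A 1 0 ∈ Epart F 1

/-- Membership in the space `W` of supertraceless matrices of `M_{1,1}(E)`. -/
def InW {F : Type*} [Field F] (A : Matrix (Fin 2) (Fin 2) (GrAlg F)) : Prop :=
  InM11 A ∧ A 0 0 = A 1 1

end

noncomputable section AuxLemmas
variable {F : Type*} [Field F]
open ExteriorAlgebra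

lemma ι_mul_ι_anticomm (m n : ℕ →₀ F) :
    ι F m * ι F n = -(ι F n * ι F m) :=
  eq_neg_of_add_eq_zero_left (ι_add_mul_swap m n)

/-- `ι m * ι n` is central. -/
lemma c_central (m n : ℕ →₀ F) (y : GrAlg F) :
    (ι F m * ι F n) * y = y * (ι F m * ι F n) := by
  induction y using ExteriorAlgebra.induction with
  | algebraMap r => rw [Algebra.commutes]
  | ι x =>
      rw [mul_assoc, ι_mul_ι_anticomm n x, mul_neg, ← mul_assoc, ι_mul_ι_anticomm m x,
        neg_mul, neg_neg, mul_assoc]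
  | mul a b ha hb => rw [← mul_assoc, ha, mul_assoc, hb, ← mul_assoc]
  | add a b ha hb => rw [mul_add, add_mul, ha, hb]

/-- The even part of the Grassmann algebra is central. -/
lemma even_central {x : GrAlg F} (hx : x ∈ Epart F 0)
    (y : GrAlg F) : x * y = y * x := by
  induction x, hx using CliffordAlgebra.even_induction with
  | algebraMap r => rw [Algebra.commutes]
  | add a b ha hb iha ihb => rw [add_mul, mul_add, iha, ihb]
  | ι_mul_ι_mul m₁ m₂ a ha iha =>
      rw [mul_assoc _ a y, iha, ← mul_assoc, c_central, mul_assoc, mul_assoc]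

/-- Odd elements of the Grassmann algebra anticommute. -/
lemma odd_anticomm {x y : GrAlg F} (hx : x ∈ Epart F 1)
    (hy : y ∈ Epart F 1) : x * y = -(y * x) := by
  induction x, hx using CliffordAlgebra.odd_induction with
  | ι v =>
      induction y, hy using CliffordAlgebra.odd_induction with
      | ι w => exact ι_mul_ι_anticomm v w
      | add a b ha hb iha ihb => rw [mul_add, add_mul, iha, ihb, neg_add]
      | ι_mul_ι_mul m₁ m₂ a ha iha =>
          rw [← mul_assoc, ← c_central, mul_assoc, iha, mul_neg, ← mul_assoc]
  | add a b ha hb iha ihb => rw [add_mul, mul_add, iha, ihb, neg_add]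
  | ι_mul_ι_mul m₁ m₂ a ha iha =>
      rw [mul_assoc _ a y, iha, mul_neg, ← mul_assoc, c_central, mul_assoc, mul_assoc]

/-- The product of two odd elements is even. -/
lemma odd_mul_odd {x y : GrAlg F} (hx : x ∈ Epart F 1)
    (hy : y ∈ Epart F 1) : x * y ∈ Epart F 0 := by
  unfold Epart at hx hy ⊢
  have := SetLike.mul_mem_graded hx hy
  norm_num at this
  exact this

end AuxLemmas

/-- for supertraceless `w₁, w₂ ∈ W` the commutator `[w₁, w₂]` is
central in `M_{1,1}(E)`; consequently `[x₁, x₂, x₃]` is a weak polynomial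
identity for `(M_{1,1}(E), W)`. -/
theorem commutator_central (F : Type*) [Field F] [Infinite F] (h2 : (2 : F) ≠ 0)
    (w₁ w₂ : Matrix (Fin 2) (Fin 2) (GrAlg F)) (h₁ : InW w₁) (h₂ : InW w₂) :
    (∀ A : Matrix (Fin 2) (Fin 2) (GrAlg F), InM11 A →
      (w₁ * w₂ - w₂ * w₁) * A = A * (w₁ * w₂ - w₂ * w₁)) ∧
    (∀ w₃ : Matrix (Fin 2) (Fin 2) (GrAlg F), InW w₃ →
      (w₁ * w₂ - w₂ * w₁) * w₃ - w₃ * (w₁ * w₂ - w₂ * w₁) = 0) := by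
  obtain ⟨⟨ha, ha', hb, hc⟩, htr⟩ := h₁
  obtain ⟨⟨ha2, ha2', hb2, hc2⟩, htr2⟩ := h₂
  set a := w₁ 0 0 with hA
  set b := w₁ 0 1 with hB
  set c := w₁ 1 0 with hC
  set a' := w₂ 0 0 with hA2
  set b' := w₂ 0 1 with hB2
  set c' := w₂ 1 0 with hC2
  set z : GrAlg F := b * c' - b' * c with hz
  have hzmem : z ∈ Epart F 0 :=
    Submodule.sub_mem _ (odd_mul_odd hb hc2) (odd_mul_odd hb2 hc)
  have e00 : (w₁ * w₂ - w₂ * w₁) 0 0 = z := by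
    simp only [Matrix.sub_apply, Matrix.mul_apply, Fin.sum_univ_two]
    simp only [← hA, ← hB, ← hC, ← hA2, ← hB2, ← hC2, ← htr, ← htr2, hz]
    rw [even_central ha a']; abel
  have e01 : (w₁ * w₂ - w₂ * w₁) 0 1 = 0 := by
    simp only [Matrix.sub_apply, Matrix.mul_apply, Fin.sum_univ_two]
    simp only [← hA, ← hB, ← hC, ← hA2, ← hB2, ← hC2, ← htr, ← htr2]
    rw [even_central ha b', even_central ha2 b]; abel
  have e10 : (w₁ * w₂ - w₂ * w₁) 1 0 = 0 := by
    simp only [Matrix.sub_apply, Matrix.mul_apply, Fin.sum_univ_two]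
    simp only [← hA, ← hB, ← hC, ← hA2, ← hB2, ← hC2, ← htr, ← htr2]
    rw [even_central ha c', even_central ha2 c]; abel
  have e11 : (w₁ * w₂ - w₂ * w₁) 1 1 = z := by
    simp only [Matrix.sub_apply, Matrix.mul_apply, Fin.sum_univ_two]
    simp only [← hA, ← hB, ← hC, ← hA2, ← hB2, ← hC2, ← htr, ← htr2, hz]
    rw [even_central ha a', odd_anticomm hc hb2, odd_anticomm hc2 hb]; abel
  have hKey : w₁ * w₂ - w₂ * w₁ = Matrix.diagonal (fun _ => z) := by
    ext i j
    fin_cases i <;> fin_cases j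
    · exact e00
    · exact e01
    · exact e10
    · exact e11
  have main : ∀ A : Matrix (Fin 2) (Fin 2) (GrAlg F),
      (w₁ * w₂ - w₂ * w₁) * A = A * (w₁ * w₂ - w₂ * w₁) := by
    intro A
    rw [hKey]
    ext i j
    rw [Matrix.diagonal_mul, Matrix.mul_diagonal]
    exact even_central hzmem (A i j)
  exact ⟨fun A _ => main A, fun w₃ _ => by rw [main w₃, sub_self]⟩
end

section
/- Schensted insertion and deletion are mutually inverse: for any semistandard tableau T and integer x, if Insert(T, x) = (T', i) then Delete(T', i) = (T, x), and conversely if Delete(T', i) = (T, x) (defined when row i of T' is strictly longer than row i+1) then Insert(T, x) = (T', i). -/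
/-!
A value `x` that bumps `y` out of a weakly increasing row sits exactly where `y` reverse-bumps
back in, so the row is restored and `x` is ejected; conversely, reverse-bumping `y` into a row and
then inserting the ejected value there bumps `y` out again. Insertion descends to row `i` along a
bumping path and deletion climbs back along the same path. For deletion from a corner to climb all
the way up, each ejected value must find a strictly smaller entry in the row above: it is an entry
of the row just left, so column strictness provides one.
-/

namespace List

theorem length_takeWhile_eq_of {α : Type*} {p : α → Bool} {l : List α} {n : ℕ}
    (hn : n ≤ l.length) (hlt : ∀ t (ht : t < n), p l[t])
    (hge : ∀ h : n < l.length, p l[n] = false) :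
    (l.takeWhile p).length = n := by
  induction l generalizing n with
  | nil =>
    rw [length_nil, Nat.le_zero] at hn
    simp [hn]
  | cons a l ih =>
    cases n with
    | zero => simp [show p a = false from hge (by simp)]
    | succ n =>
      rw [takeWhile_cons_of_pos (by simpa using hlt 0 (by omega)), length_cons,
        ih (by simpa using hn) (fun t ht => hlt (t + 1) (by omega))
          (fun h => hge (by simpa using h))]

theorem exists_getElem_of_length_takeWhile_eq_succ {α : Type*} {p : α → Bool} {l : List α}
    {k : ℕ} (h : (l.takeWhile p).length = k + 1) : ∃ hk : k < l.length, p l[k] := by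
  have hk : k < (l.takeWhile p).length := by omega
  refine ⟨hk.trans_le (takeWhile_sublist p).length_le, ?_⟩
  rw [← (takeWhile_prefix p).getElem hk]
  exact mem_takeWhile_imp (getElem_mem hk)

end List

open List

theorem revBump_cons_of_length_takeWhile {r : List ℕ} {rs : List (List ℕ)} {v k : ℕ}
    (h : (r.takeWhile (· < v)).length = k + 1) :
    revBump (r :: rs) v =
      (r.set k v :: (revBump rs (r.getD k 0)).1, (revBump rs (r.getD k 0)).2) := by
  simp [revBump, h]

theorem rinsert_cons_of_findIdx?_eq_none {r : List ℕ} {rs : List (List ℕ)} {x : ℕ}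
    (h : r.findIdx? (x < ·) = none) : rinsert (r :: rs) x = ((r ++ [x]) :: rs, 0) := by
  simp [rinsert, h]

theorem rinsert_cons_of_findIdx?_eq_some {r : List ℕ} {rs : List (List ℕ)} {x j : ℕ}
    (h : r.findIdx? (x < ·) = some j) :
    rinsert (r :: rs) x =
      (r.set j x :: (rinsert rs (r.getD j 0)).1, (rinsert rs (r.getD j 0)).2 + 1) := by
  simp [rinsert, h]

theorem revBump_set_of_findIdx?_eq_some {r : List ℕ} (hr : r.Pairwise (· ≤ ·)) {x j : ℕ}
    (hj : r.findIdx? (x < ·) = some j) (B : List (List ℕ)) :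
    revBump (r.set j x :: B) (r.getD j 0) = (r :: (revBump B x).1, (revBump B x).2) := by
  obtain ⟨hjr, hfind⟩ := findIdx?_eq_some_iff_findIdx_eq.mp hj
  obtain ⟨hxj, hle⟩ := (findIdx_eq hjr).mp hfind
  simp only [decide_eq_true_eq, decide_eq_false_iff_not, not_lt] at hxj hle
  have hk : ((r.set j x).takeWhile (· < r.getD j 0)).length = j + 1 := by
    rw [getD_eq_getElem _ _ hjr]
    apply length_takeWhile_eq_of (by simpa using hjr)
    · intro t ht
      rw [getElem_set]
      split_ifs with htj
      · simpa using hxj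
      · simpa using (hle t (by omega)).trans_lt hxj
    · intro h
      rw [getElem_set_ne (by omega)]
      simpa using pairwise_iff_getElem.mp hr j (j + 1) hjr (by simpa using h) (by omega)
  rw [revBump_cons_of_length_takeWhile hk, getD_eq_getElem _ _ hjr, set_set, set_getElem_self,
    getD_eq_getElem _ _ (by simpa using hjr), getElem_set_self]

theorem findIdx?_set_eq_some {r : List ℕ} (hr : r.Pairwise (· ≤ ·)) {k v : ℕ}
    (hk : k < r.length) (hv : r[k] < v) : (r.set k v).findIdx? (r.getD k 0 < ·) = some k := by
  rw [findIdx?_eq_some_iff_findIdx_eq, length_set, findIdx_eq (by simpa using hk),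
    getD_eq_getElem _ _ hk]
  refine ⟨hk, by simpa using hv, fun t ht => ?_⟩
  rw [getElem_set_ne (by omega)]
  simpa using pairwise_iff_getElem.mp hr t k (by omega) hk ht

theorem lt_length_of_length_getD_lt {α : Type*} {T : List (List α)} {i n : ℕ}
    (h : n < (T.getD i []).length) : i < T.length := by
  by_contra! hi
  rw [getD_eq_default _ _ hi] at h
  exact Nat.not_lt_zero n h

theorem ite_getD_append_drop {α : Type*} {T : List (List α)} (hT : [] ∉ T) (i : ℕ) :
    (if T.getD i [] = [] then [] else [T.getD i []]) ++ T.drop (i + 1) = T.drop i := by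
  by_cases hi : i < T.length
  · rw [getD_eq_getElem _ _ hi, if_neg (fun h0 : T[i] = [] => hT (h0 ▸ getElem_mem hi)),
      drop_eq_getElem_cons hi, singleton_append]
  · rw [not_lt] at hi
    rw [getD_eq_default _ _ hi, if_pos rfl, nil_append, drop_eq_nil_of_le hi,
      drop_eq_nil_of_le (by omega)]

theorem IsSSYT.tail {r : List ℕ} {T : List (List ℕ)} (h : IsSSYT (r :: T)) : IsSSYT T := by
  obtain ⟨hrow, hcol, hlen, hne⟩ := h
  exact ⟨fun s hs => hrow s (mem_cons_of_mem r hs), fun i => hcol (i + 1), fun i => hlen (i + 1),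
    fun h => hne (mem_cons_of_mem r h)⟩

theorem IsSSYT.getD_ne_nil {T : List (List ℕ)} (h : IsSSYT T) {i : ℕ} (hi : i < T.length) :
    T.getD i [] ≠ [] := by
  rw [getD_eq_getElem _ _ hi]
  exact fun h0 => h.2.2.2 (h0 ▸ getElem_mem hi)

theorem IsSSYT.exists_length_takeWhile_eq_succ {r s : List ℕ} {T : List (List ℕ)}
    (h : IsSSYT (r :: s :: T)) {w : ℕ} (hw : w ∈ s) :
    ∃ k, (r.takeWhile (· < w)).length = k + 1 := by
  obtain ⟨q, hqs, rfl⟩ := getElem_of_mem hw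
  have hqr : q < r.length := hqs.trans_le (h.2.2.1 0)
  have hcol : r[q] < s[q] := h.2.1 0 q _ _ (getElem?_eq_getElem hqr) (getElem?_eq_getElem hqs)
  obtain ⟨a, r, rfl⟩ := exists_cons_of_length_pos (Nat.zero_lt_of_lt hqr)
  have ha : a ≤ (a :: r)[q] := by
    rcases q with _ | q
    · rfl
    · exact rel_of_pairwise_cons (h.1 _ mem_cons_self) (getElem_mem _)
  exact ⟨_, by rw [takeWhile_cons_of_pos (by simpa using ha.trans_lt hcol), length_cons]⟩

theorem exists_getD_eq_append_of_rinsert_eq {T T' : List (List ℕ)} {x i : ℕ}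
    (h : rinsert T x = (T', i)) :
    ∃ y, T'.getD i [] = T.getD i [] ++ [y] ∧ T'.drop (i + 1) = T.drop (i + 1) := by
  induction T generalizing x T' i with
  | nil =>
    obtain ⟨rfl, rfl⟩ := Prod.mk.inj h.symm
    exact ⟨x, rfl, rfl⟩
  | cons r rs ih =>
    rcases hfind : r.findIdx? (x < ·) with _ | j
    · rw [rinsert_cons_of_findIdx?_eq_none hfind] at h
      obtain ⟨rfl, rfl⟩ := Prod.mk.inj h.symm
      exact ⟨x, rfl, rfl⟩
    · rcases hP : rinsert rs (r.getD j 0) with ⟨P, i'⟩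
      rw [rinsert_cons_of_findIdx?_eq_some hfind, hP] at h
      obtain ⟨rfl, rfl⟩ := Prod.mk.inj h.symm
      exact ih hP

-- `revBump` climbs the rows bottom-up while `rinsert` descends them top-down, hence the
-- arbitrary rows `B` still to be climbed after the first row.
theorem revBump_take_reverse_of_rinsert_eq {T T' : List (List ℕ)} {x i : ℕ} (hT : IsSSYT T)
    (h : rinsert T x = (T', i)) (B : List (List ℕ)) :
    revBump ((T'.take i).reverse ++ B) ((T'.getD i []).getLastD 0) =
      ((T.take i).reverse ++ (revBump B x).1, (revBump B x).2) := by
  induction T generalizing x T' i B with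
  | nil =>
    obtain ⟨rfl, rfl⟩ := Prod.mk.inj h.symm
    rfl
  | cons r rs ih =>
    rcases hfind : r.findIdx? (x < ·) with _ | j
    · rw [rinsert_cons_of_findIdx?_eq_none hfind] at h
      obtain ⟨rfl, rfl⟩ := Prod.mk.inj h.symm
      simp
    · rcases hP : rinsert rs (r.getD j 0) with ⟨P, i'⟩
      rw [rinsert_cons_of_findIdx?_eq_some hfind, hP] at h
      obtain ⟨rfl, rfl⟩ := Prod.mk.inj h.symm
      simp only [take_succ_cons, reverse_cons, getD_cons_succ, append_assoc, singleton_append]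
      rw [ih hT.tail hP, revBump_set_of_findIdx?_eq_some (hT.1 r mem_cons_self) hfind]

theorem schDelete_of_rinsert_eq {T T' : List (List ℕ)} {x i : ℕ} (hT : IsSSYT T)
    (h : rinsert T x = (T', i)) : schDelete T' i = (T, x) := by
  obtain ⟨y, hrow, hdrop⟩ := exists_getD_eq_append_of_rinsert_eq h
  have hbump := revBump_take_reverse_of_rinsert_eq hT h []
  simp only [hrow, getLastD_concat, revBump, append_nil] at hbump
  simp only [schDelete, hrow, getLastD_concat, dropLast_concat, hbump, hdrop]
  rw [reverse_reverse, append_assoc, ite_getD_append_drop hT.2.2.2, take_append_drop]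

theorem exists_revBump_take_reverse_append {T : List (List ℕ)} (hT : IsSSYT T) {i : ℕ}
    (hi : i < T.length) :
    ∃ U, ∃ w ∈ T.getD 0 [], ∀ B,
      revBump ((T.take i).reverse ++ B) ((T.getD i []).getLastD 0) =
        (U ++ (revBump B w).1, (revBump B w).2) := by
  induction i generalizing T with
  | zero =>
    refine ⟨[], (T.getD 0 []).getLastD 0, ?_, fun B => by simp⟩
    have hne := hT.getD_ne_nil hi
    rw [getLastD_eq_getLast?, getLast?_eq_some_getLast hne]
    exact getLast_mem hne
  | succ i ih =>
    obtain ⟨r, s, T, rfl⟩ : ∃ r s T', T = r :: s :: T' := by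
      match T, hi with
      | r :: s :: T', _ => exact ⟨r, s, T', rfl⟩
    obtain ⟨U, w, hw, hB⟩ := ih hT.tail (Nat.lt_of_succ_lt_succ hi)
    obtain ⟨k, hk⟩ := hT.exists_length_takeWhile_eq_succ hw
    refine ⟨U ++ [r.set k w], r.getD k 0, ?_, fun B => ?_⟩
    · obtain ⟨hkr, -⟩ := exists_getElem_of_length_takeWhile_eq_succ hk
      rw [getD_cons_zero, getD_eq_getElem _ _ hkr]
      exact getElem_mem hkr
    · simp only [take_succ_cons, reverse_cons, getD_cons_succ, append_assoc, singleton_append]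
      rw [hB, revBump_cons_of_length_takeWhile hk]

theorem schDelete_cons_succ {r : List ℕ} {T : List (List ℕ)} (hT : IsSSYT (r :: T)) {i : ℕ}
    (hi : i < T.length) :
    ∃ k, (r.takeWhile (· < (schDelete T i).2)).length = k + 1 ∧
      schDelete (r :: T) (i + 1) =
        (r.set k (schDelete T i).2 :: (schDelete T i).1, r.getD k 0) := by
  obtain ⟨U, w, hw, hB⟩ := exists_revBump_take_reverse_append hT.tail hi
  obtain ⟨s, T, rfl⟩ := exists_cons_of_length_pos (Nat.zero_lt_of_lt hi)
  obtain ⟨k, hk⟩ := hT.exists_length_takeWhile_eq_succ hw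
  have h0 := hB []
  have h1 := hB [r]
  simp only [append_nil, revBump] at h0
  rw [revBump_cons_of_length_takeWhile hk] at h1
  simp only [revBump] at h1
  refine ⟨k, ?_, ?_⟩
  · simpa only [schDelete, h0] using hk
  · simp only [schDelete, take_succ_cons, reverse_cons, getD_cons_succ, drop_succ_cons, h0, h1]
    rw [reverse_append, reverse_singleton, singleton_append, cons_append, cons_append]

theorem rinsert_schDelete_zero {r : List ℕ} {T : List (List ℕ)} (hT : IsSSYT (r :: T))
    (hcorner : (T.getD 0 []).length < r.length) :
    rinsert (schDelete (r :: T) 0).1 (schDelete (r :: T) 0).2 = (r :: T, 0) := by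
  have hr : r ≠ [] := ne_nil_of_length_pos (Nat.zero_lt_of_lt hcorner)
  obtain ⟨d, m, rfl⟩ : ∃ d m, r = d ++ [m] :=
    ⟨r.dropLast, r.getLast hr, (dropLast_append_getLast hr).symm⟩
  simp only [schDelete, take_zero, reverse_nil, revBump, getD_cons_zero, getLastD_concat,
    dropLast_concat, drop_succ_cons, drop_zero, nil_append]
  by_cases hd : d = []
  · subst hd
    obtain rfl : T = [] := by
      by_contra hT0
      refine hT.tail.getD_ne_nil (length_pos_of_ne_nil hT0) (eq_nil_of_length_eq_zero ?_)
      simp only [nil_append, length_singleton] at hcorner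
      omega
    rfl
  · have hm : ∀ e ∈ d, e ≤ m := fun e he =>
      (pairwise_append.mp (hT.1 _ mem_cons_self)).2.2 e he m mem_cons_self
    rw [if_neg hd, singleton_append, rinsert_cons_of_findIdx?_eq_none
      (findIdx?_eq_none_iff.mpr fun e he => by simpa using hm e he)]

theorem rinsert_schDelete {T : List (List ℕ)} (hT : IsSSYT T) {i : ℕ}
    (hcorner : (T.getD (i + 1) []).length < (T.getD i []).length) :
    rinsert (schDelete T i).1 (schDelete T i).2 = (T, i) := by
  obtain ⟨r, T, rfl⟩ :=
    exists_cons_of_length_pos (Nat.zero_lt_of_lt (lt_length_of_length_getD_lt hcorner))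
  induction i generalizing r T with
  | zero => exact rinsert_schDelete_zero hT hcorner
  | succ i ih =>
    rw [getD_cons_succ, getD_cons_succ] at hcorner
    have hi := lt_length_of_length_getD_lt hcorner
    obtain ⟨k, hk, hdel⟩ := schDelete_cons_succ hT hi
    obtain ⟨hkr, hlt⟩ := exists_getElem_of_length_takeWhile_eq_succ hk
    obtain ⟨s, T, rfl⟩ := exists_cons_of_length_pos (Nat.zero_lt_of_lt hi)
    rw [hdel, rinsert_cons_of_findIdx?_eq_some
        (findIdx?_set_eq_some (hT.1 r mem_cons_self) hkr (by simpa using hlt)),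
      getD_eq_getElem (r.set k _) 0 (by simpa using hkr), getElem_set_self,
      ih _ _ hT.tail hcorner, set_set, getD_eq_getElem _ _ hkr, set_getElem_self]

/-- Schensted insertion and deletion are mutually inverse. -/
theorem insert_delete_inverse (T T' : List (List ℕ)) (x i : ℕ) (hT : IsSSYT T) :
    (rinsert T x = (T', i) → schDelete T' i = (T, x)) ∧
    (IsSSYT T' → (T'.getD (i + 1) []).length < (T'.getD i []).length →
      schDelete T' i = (T, x) → rinsert T x = (T', i)) := by
  refine ⟨schDelete_of_rinsert_eq hT, fun hT' hcorner hdel => ?_⟩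
  simpa only [hdel] using rinsert_schDelete hT' hcorner
end

section
/- Let S be a c-array with bottom row b_1, ..., b_m and let T = Carray2Dtableau(S). Then the length of the first row of T equals the length of the longest weakly increasing subsequence of the sequence b_1, ..., b_m. -/
/-! The first row of `c2d S` only ever changes by Schensted row insertion of the bottom entries
`b_k` (each top entry `a_k` goes to a lower row), so it is the patience-sorting row of
`b_1, …, b_m`. After reading a prefix, its `i`-th entry is the least possible last entry of a
weakly increasing subsequence of length `i + 1` of that prefix; in particular the row is exactly
as long as the longest such subsequence. -/

section RowInsert

variable {α : Type*} [LinearOrder α]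

/- `x` replaces the first entry exceeding it; when there is none, `findIdx` is the length of
`r` and `x` is appended. -/
def rowInsert (r : List α) (x : α) : List α :=
  r.take (r.findIdx (x < ·)) ++ x :: r.drop (r.findIdx (x < ·) + 1)

variable {r : List α} {x : α} {i : ℕ}

theorem getElem_le_of_lt_findIdx (h : i < r.findIdx (x < ·)) :
    r[i]'(h.trans_le List.findIdx_le_length) ≤ x :=
  not_lt.mp (by simpa using List.not_of_lt_findIdx h)

theorem lt_getElem_findIdx (h : r.findIdx (x < ·) < r.length) : x < r[r.findIdx (x < ·)] := by
  simpa using List.findIdx_getElem (w := h)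

theorem lt_length_rowInsert_iff :
    i < (rowInsert r x).length ↔ i < r.length ∨ i = r.findIdx (x < ·) := by
  have := List.findIdx_le_length (p := (x < ·)) (xs := r)
  simp only [rowInsert, List.length_append, List.length_take, List.length_cons, List.length_drop]
  omega

theorem getElem_rowInsert_findIdx (h) : (rowInsert r x)[r.findIdx (x < ·)]'h = x := by
  simp [rowInsert, List.findIdx_le_length]

theorem getElem_rowInsert_of_ne (h) (hi : i ≠ r.findIdx (x < ·)) :
    (rowInsert r x)[i]'h = r[i]'(by have := lt_length_rowInsert_iff.mp h; omega) := by
  have := List.findIdx_le_length (p := (x < ·)) (xs := r)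
  simp only [rowInsert, List.getElem_append, List.length_take, List.getElem_take]
  split
  · rfl
  · rw [List.getElem_cons]
    split
    · omega
    · simp only [List.getElem_drop]; congr 1; omega

theorem getElem_rowInsert_le (hi : i < r.length) :
    (rowInsert r x)[i]'(lt_length_rowInsert_iff.mpr (.inl hi)) ≤ r[i] := by
  by_cases h : i = r.findIdx (x < ·)
  · subst h; rw [getElem_rowInsert_findIdx]; exact (lt_getElem_findIdx hi).le
  · rw [getElem_rowInsert_of_ne _ h]

theorem getElem_rowInsert_le_of_le_findIdx (hi : i ≤ r.findIdx (x < ·)) :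
    ∃ h : i < (rowInsert r x).length, (rowInsert r x)[i] ≤ x := by
  have hlen : i < (rowInsert r x).length := lt_length_rowInsert_iff.mpr (by
    have := List.findIdx_le_length (p := (x < ·)) (xs := r); omega)
  refine ⟨hlen, ?_⟩
  rcases hi.lt_or_eq with hlt | rfl
  · rw [getElem_rowInsert_of_ne _ hlt.ne]; exact getElem_le_of_lt_findIdx hlt
  · rw [getElem_rowInsert_findIdx]

end RowInsert

section Patience

variable {α : Type*} [LinearOrder α]

def BoundsSomeSubseq (l r : List α) : Prop :=
  ∀ i (hi : i < r.length), ∃ t : List α,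
    t.Sublist l ∧ t.Pairwise (· ≤ ·) ∧ t.length = i + 1 ∧ ∀ a ∈ t, a ≤ r[i]

def LeEverySubseq (l r : List α) : Prop :=
  ∀ t : List α, t.Sublist l → t.Pairwise (· ≤ ·) →
    ∀ i (hi : i < t.length), ∃ h : i < r.length, r[i] ≤ t[i]

variable {l r : List α}

theorem BoundsSomeSubseq.rowInsert (h : BoundsSomeSubseq l r) (x : α) :
    BoundsSomeSubseq (l ++ [x]) (rowInsert r x) := by
  unfold BoundsSomeSubseq at h ⊢
  intro i hi
  by_cases hij : i = r.findIdx (x < ·)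
  · subst hij
    rw [getElem_rowInsert_findIdx]
    rcases Nat.eq_zero_or_pos (r.findIdx (x < ·)) with h0 | hpos
    · exact ⟨[x], List.sublist_append_right l [x], by simp, by simp [h0], by simp⟩
    · have hprev := Nat.sub_lt hpos one_pos
      obtain ⟨t, hsub, hsort, hlen, hle⟩ := h _ (hprev.trans_le List.findIdx_le_length)
      have hbound : ∀ a ∈ t, a ≤ x :=
        fun a ha => (hle a ha).trans (getElem_le_of_lt_findIdx hprev)
      exact ⟨t ++ [x], hsub.append (.refl _),
        by simpa [List.pairwise_append] using ⟨hsort, hbound⟩,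
        by simp [hlen]; omega, by simpa [or_imp, forall_and] using hbound⟩
  · rw [getElem_rowInsert_of_ne _ hij]
    obtain ⟨t, hsub, hsort, hlen, hle⟩ := h i _
    exact ⟨t, hsub.trans (List.sublist_append_left l [x]), hsort, hlen, hle⟩

theorem LeEverySubseq.rowInsert (h : LeEverySubseq l r) (x : α) :
    LeEverySubseq (l ++ [x]) (rowInsert r x) := by
  unfold LeEverySubseq at h ⊢
  intro t hsub hsort i hi
  obtain ⟨t, s, rfl, ht, hs⟩ := List.sublist_append_iff.mp hsub
  rcases List.sublist_singleton.mp hs with rfl | rfl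
  · simp only [List.append_nil] at hsort hi ⊢
    obtain ⟨hir, hle⟩ := h t ht hsort i hi
    exact ⟨lt_length_rowInsert_iff.mpr (.inl hir), (getElem_rowInsert_le hir).trans hle⟩
  · obtain ⟨hsort', -, htx⟩ := List.pairwise_append.mp hsort
    replace htx : ∀ a ∈ t, a ≤ x := fun a ha => htx a ha x (List.mem_singleton_self x)
    have hlen : t.length ≤ r.findIdx (x < ·) := by
      by_contra! hlt
      obtain ⟨hj, hle⟩ := h t ht hsort' _ hlt
      exact (lt_getElem_findIdx hj).not_ge (hle.trans (htx _ (List.getElem_mem _)))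
    rw [List.length_append, List.length_singleton] at hi
    rcases (Nat.lt_succ_iff.mp hi).lt_or_eq with hit | rfl
    · obtain ⟨hir, hle⟩ := h t ht hsort' i hit
      refine ⟨lt_length_rowInsert_iff.mpr (.inl hir), ?_⟩
      rw [getElem_rowInsert_of_ne _ (by omega), List.getElem_append_left hit]
      exact hle
    · obtain ⟨hlen', hle⟩ := getElem_rowInsert_le_of_le_findIdx hlen
      exact ⟨hlen', by simpa using hle⟩

theorem boundsSomeSubseq_foldl_rowInsert (l : List α) :
    BoundsSomeSubseq l (l.foldl rowInsert []) := by
  induction l using List.reverseRecOn with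
  | nil => intro i hi; simp at hi
  | append_singleton l x ih => simpa using ih.rowInsert x

theorem leEverySubseq_foldl_rowInsert (l : List α) :
    LeEverySubseq l (l.foldl rowInsert []) := by
  induction l using List.reverseRecOn with
  | nil => rintro t ht - i hi; simp [List.sublist_nil.mp ht] at hi
  | append_singleton l x ih => simpa using ih.rowInsert x

theorem isGreatest_length_foldl_rowInsert (l : List α) :
    IsGreatest {n | ∃ t : List α, t.Sublist l ∧ t.Pairwise (· ≤ ·) ∧ t.length = n}
      (l.foldl rowInsert []).length := by
  constructor
  · obtain h0 | hpos := Nat.eq_zero_or_pos (l.foldl rowInsert []).length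
    · exact ⟨[], List.nil_sublist _, .nil, h0.symm⟩
    · obtain ⟨t, hsub, hsort, hlen, -⟩ :=
        boundsSomeSubseq_foldl_rowInsert l _ (Nat.sub_lt hpos one_pos)
      exact ⟨t, hsub, hsort, by omega⟩
  · rintro _ ⟨t, hsub, hsort, rfl⟩
    by_contra! hlt
    obtain ⟨h, -⟩ := leEverySubseq_foldl_rowInsert l t hsub hsort _ hlt
    exact h.false

end Patience

theorem rinsert_fst_ne_nil (T : List (List ℕ)) (x : ℕ) : (rinsert T x).1 ≠ [] := by
  cases T with
  | nil => simp [rinsert]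
  | cons r rs => simp only [rinsert]; split <;> simp

theorem getD_zero_rinsert (T : List (List ℕ)) (x : ℕ) :
    (rinsert T x).1.getD 0 [] = rowInsert (T.getD 0 []) x := by
  cases T with
  | nil => simp [rinsert, rowInsert]
  | cons r rs =>
    simp only [rinsert]
    split
    next h =>
      rw [List.findIdx?_eq_none_iff_findIdx_eq] at h
      simp [rowInsert, h]
    next j h =>
      obtain ⟨hj, rfl⟩ := List.findIdx?_eq_some_iff_findIdx_eq.mp h
      simp [rowInsert, List.set_eq_take_append_cons_drop, hj]

theorem getD_zero_c2dStep (T : List (List ℕ)) (p : ℕ × ℕ) :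
    (c2dStep T p).getD 0 [] = rowInsert (T.getD 0 []) p.2 := by
  rw [← getD_zero_rinsert, c2dStep]
  split
  · simp [List.getD_eq_getElem?_getD]
  · rw [List.getD_append _ _ _ _ (List.length_pos_iff.mpr (rinsert_fst_ne_nil T p.2))]

theorem getD_zero_c2d (S : List (ℕ × ℕ)) :
    (c2d S).getD 0 [] = (S.map Prod.snd).foldl rowInsert [] := by
  rw [List.foldl_map, c2d]
  exact (List.foldl_hom (g₁ := c2dStep) (g₂ := fun r p => rowInsert r p.2) (·.getD 0 [])
    fun T p => (getD_zero_c2dStep T p).symm).symm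

theorem first_row_eq_longest_weakly_increasing_general (S : List (ℕ × ℕ)) :
    IsGreatest {l | ∃ t : List ℕ, t.Sublist (S.map Prod.snd) ∧
        t.Pairwise (· ≤ ·) ∧ t.length = l}
      ((c2d S).getD 0 []).length := by
  rw [getD_zero_c2d]
  exact isGreatest_length_foldl_rowInsert _

/-- the length of the first row of `Carray2Dtableau S` is the
length of the longest weakly increasing subsequence of the bottom row of `S`. -/
theorem first_row_eq_longest_weakly_increasing (S : List (ℕ × ℕ)) (hS : IsCArray S) :
    IsGreatest {l | ∃ t : List ℕ, t.Sublist (S.map Prod.snd) ∧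
        t.Pairwise (· ≤ ·) ∧ t.length = l}
      ((c2d S).getD 0 []).length :=
  first_row_eq_longest_weakly_increasing_general S
end

section
/- Let the content be (2,...,2 (r times), 1,...,1 (2s times), 2,...,2 (r times)) on k = 2r + 2s values. Then every normal c-array S of this content decomposes uniquely as S = S' * S̄, where S̄ has columns (k−r+j, r+1−j) each repeated twice for j = 1,...,r, and S' is a normal c-array whose entries form the set {r+1, ..., r+2s} with each value occurring exactly once. Consequently the number of normal c-arrays of this content equals the number of multilinear normal c-arrays on 2s values. -/
/-- The array `S̄` with columns `(k-r+j, r+1-j)`, `j = 1, …, r`, each repeated twice. -/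
def sbarArr (r k : ℕ) : List (ℕ × ℕ) :=
  (List.range r).flatMap (fun j => [(k - r + 1 + j, r - j), (k - r + 1 + j, r - j)])

/-- Content `(2,…,2 (r times), 1,…,1 (2s times), 2,…,2 (r times))` on `k` values. -/
def contentRSR (r s k v : ℕ) : ℕ :=
  if v = 0 then 0
  else if v ≤ r then 2
  else if v ≤ r + 2 * s then 1
  else if v ≤ k then 2 else 0

/-!
The largest value `a` and the smallest value `b` of the content each occur twice. Since every
column has its top entry above its bottom entry, `a` occurs only in the top row, hence in the last
two columns, and `b` only in the bottom row; an occurrence of `b` before the last two columns would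
start a weakly increasing bottom subsequence of length three, so both last columns are `(a, b)`.
Removing them and repeating `r` times peels off `S̄`. Shifting all values down by `r` identifies
the remaining arrays with the multilinear normal c-arrays on `{1, …, 2s}`.
-/

abbrev ColLE (p q : ℕ × ℕ) : Prop := p.1 < q.1 ∨ (p.1 = q.1 ∧ p.2 ≤ q.2)

instance : Trans ColLE ColLE ColLE := ⟨fun h₁ h₂ => by omega⟩

theorem isCArray_iff_pairwise {S : List (ℕ × ℕ)} :
    IsCArray S ↔ (∀ p ∈ S, p.2 < p.1) ∧ S.Pairwise ColLE :=
  and_congr_right fun _ => List.isChain_iff_pairwise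

theorem IsCArray.sublist {S T : List (ℕ × ℕ)} (hS : IsCArray S) (hT : T.Sublist S) :
    IsCArray T := by
  rw [isCArray_iff_pairwise] at hS ⊢
  exact ⟨fun p hp => hS.1 p (hT.subset hp), hS.2.sublist hT⟩

theorem IsCArray.append {A B : List (ℕ × ℕ)} (hA : IsCArray A) (hB : IsCArray B)
    (hAB : ∀ p ∈ A, ∀ q ∈ B, p.1 < q.1) : IsCArray (A ++ B) := by
  rw [isCArray_iff_pairwise] at hA hB ⊢
  refine ⟨fun p hp => ?_,
    List.pairwise_append.2 ⟨hA.2, hB.2, fun p hp q hq => .inl (hAB p hp q hq)⟩⟩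
  rcases List.mem_append.1 hp with h | h
  exacts [hA.1 p h, hB.1 p h]

theorem IsCArray.pairwise_fst_le {S : List (ℕ × ℕ)} (hS : IsCArray S) :
    S.Pairwise fun p q => p.1 ≤ q.1 :=
  (isCArray_iff_pairwise.1 hS).2.imp fun h => by omega

theorem isCArray_double {a b : ℕ} (hba : b < a) : IsCArray [(a, b), (a, b)] := by
  rw [isCArray_iff_pairwise]
  simp [hba, ColLE]

theorem cntA_eq (S : List (ℕ × ℕ)) (v : ℕ) :
    cntA S v = (S.map Prod.fst).count v + (S.map Prod.snd).count v :=
  List.count_append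

theorem cntA_append (A B : List (ℕ × ℕ)) (v : ℕ) :
    cntA (A ++ B) v = cntA A v + cntA B v := by
  simp only [cntA_eq, List.map_append, List.count_append]
  omega

theorem cntA_double (a b v : ℕ) :
    cntA [(a, b), (a, b)] v = (if v = a then 2 else 0) + (if v = b then 2 else 0) := by
  simp only [cntA_eq, List.map_cons, List.map_nil, List.count_cons, List.count_nil, beq_iff_eq]
  split_ifs <;> omega

theorem cntA_fst_pos {S : List (ℕ × ℕ)} {p : ℕ × ℕ} (hp : p ∈ S) : 0 < cntA S p.1 :=
  List.count_pos_iff.2 (List.mem_append_left _ (List.mem_map_of_mem hp))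

theorem cntA_snd_pos {S : List (ℕ × ℕ)} {p : ℕ × ℕ} (hp : p ∈ S) : 0 < cntA S p.2 :=
  List.count_pos_iff.2 (List.mem_append_right _ (List.mem_map_of_mem hp))

theorem IsNormal.sublist {S T : List (ℕ × ℕ)} (hS : IsNormal S) (hT : T.Sublist S) :
    IsNormal T :=
  ⟨fun v => (List.Sublist.count_le v ((hT.map _).append (hT.map _))).trans (hS.1 v),
    fun t ht hts => hS.2 t (ht.trans (hT.map _)) hts⟩

theorem IsNormal.append {A B : List (ℕ × ℕ)} (hA : IsNormal A) (hB : IsNormal B)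
    (hcnt : ∀ v, cntA (A ++ B) v ≤ 2) (hAB : ∀ p ∈ A, ∀ q ∈ B, q.2 < p.2) :
    IsNormal (A ++ B) := by
  refine ⟨hcnt, fun t ht hts => ?_⟩
  rw [List.map_append] at ht
  obtain ⟨t₁, t₂, rfl, h₁, h₂⟩ := List.sublist_append_iff.1 ht
  rcases t₁ with _ | ⟨x, t₁⟩
  · exact hB.2 t₂ h₂ hts
  rcases t₂ with _ | ⟨y, t₂⟩
  · rw [List.append_nil] at hts ⊢
    exact hA.2 _ h₁ hts
  obtain ⟨p, hp, rfl⟩ := List.mem_map.1 (h₁.subset List.mem_cons_self)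
  obtain ⟨q, hq, rfl⟩ := List.mem_map.1 (h₂.subset List.mem_cons_self)
  have := (List.pairwise_append.1 hts).2.2 _ List.mem_cons_self _ List.mem_cons_self
  exact absurd (hAB p hp q hq) (not_lt.2 this)

theorem isNormal_double {a b : ℕ} (hba : b < a) : IsNormal [(a, b), (a, b)] := by
  refine ⟨fun v => ?_, fun t ht _ => by simpa using ht.length_le⟩
  rw [cntA_double]
  split_ifs <;> omega

def ladder (c b m : ℕ) : List (ℕ × ℕ) :=
  (List.range m).flatMap fun j => [(c + 1 + j, b - j), (c + 1 + j, b - j)]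

theorem sbarArr_eq_ladder (r k : ℕ) : sbarArr r k = ladder (k - r) r r := rfl

section Ladder

variable {c b : ℕ}

theorem ladder_succ (m : ℕ) :
    ladder c b (m + 1) = ladder c b m ++ [(c + 1 + m, b - m), (c + 1 + m, b - m)] := by
  simp [ladder, List.range_succ]

theorem mem_ladder {m : ℕ} {p : ℕ × ℕ} :
    p ∈ ladder c b m ↔ ∃ j < m, p = (c + 1 + j, b - j) := by
  simp [ladder]

theorem cntA_ladder {m : ℕ} (hm : m ≤ b) (v : ℕ) :
    cntA (ladder c b m) v =
      (if b - m < v ∧ v ≤ b then 2 else 0) + (if c < v ∧ v ≤ c + m then 2 else 0) := by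
  induction m with
  | zero =>
    simp only [ladder, List.range_zero, List.flatMap_nil, cntA, List.map_nil, List.append_nil,
      List.count_nil]
    split_ifs <;> omega
  | succ m ih =>
    rw [ladder_succ, cntA_append, ih (by omega), cntA_double]
    split_ifs <;> omega

theorem isCArray_ladder (hbc : b ≤ c) (m : ℕ) : IsCArray (ladder c b m) := by
  induction m with
  | zero => simp [ladder, isCArray_iff_pairwise]
  | succ m ih =>
    rw [ladder_succ]
    refine ih.append (isCArray_double (by omega)) fun p hp q hq => ?_
    obtain ⟨j, hj, rfl⟩ := mem_ladder.1 hp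
    simp only [List.mem_cons, List.not_mem_nil, or_false, or_self] at hq
    subst hq
    dsimp only
    omega

theorem isNormal_ladder (hbc : b ≤ c) {m : ℕ} (hm : m ≤ b) : IsNormal (ladder c b m) := by
  induction m with
  | zero => simp [ladder, IsNormal, cntA]
  | succ m ih =>
    rw [ladder_succ]
    refine (ih (by omega)).append (isNormal_double (by omega)) (fun v => ?_) fun p hp q hq => ?_
    · rw [← ladder_succ, cntA_ladder hm]
      split_ifs <;> omega
    · obtain ⟨j, hj, rfl⟩ := mem_ladder.1 hp
      simp only [List.mem_cons, List.not_mem_nil, or_false, or_self] at hq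
      subst hq
      dsimp only
      omega

end Ladder

section Peel

variable {S₀ : List (ℕ × ℕ)} {p q : ℕ × ℕ}

theorem fst_eq_of_count_fst_eq_two (hC : IsCArray (S₀ ++ [p, q])) {a : ℕ}
    (hle : ∀ x ∈ S₀ ++ [p, q], x.1 ≤ a) (ha : ((S₀ ++ [p, q]).map Prod.fst).count a = 2) :
    p.1 = a ∧ q.1 = a := by
  obtain ⟨-, hpq_sorted, hS₀p⟩ := List.pairwise_append.1 hC.pairwise_fst_le
  have hpq : p.1 ≤ q.1 := List.rel_of_pairwise_cons hpq_sorted (List.mem_singleton_self _)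
  have hqa : q.1 ≤ a := hle q (by simp)
  suffices hpa : a ≤ p.1 by omega
  by_contra! hpa
  have hS₀ : (S₀.map Prod.fst).count a = 0 :=
    List.count_eq_zero.2 fun hx => by
      obtain ⟨x, hxS, hxa⟩ := List.mem_map.1 hx
      exact absurd (hS₀p x hxS p List.mem_cons_self) (by omega)
  simp only [List.map_append, List.count_append, hS₀, List.map_cons, List.map_nil,
    List.count_cons, List.count_nil, beq_iff_eq] at ha
  split_ifs at ha <;> omega

theorem snd_eq_of_count_snd_eq_two (hC : IsCArray (S₀ ++ [p, q])) (hN : IsNormal (S₀ ++ [p, q]))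
    (hpq : p.1 = q.1) {b : ℕ} (hge : ∀ x ∈ S₀ ++ [p, q], b ≤ x.2)
    (hb : ((S₀ ++ [p, q]).map Prod.snd).count b = 2) : p.2 = b ∧ q.2 = b := by
  have hpq₂ : p.2 ≤ q.2 := by
    have := List.rel_of_pairwise_cons (List.pairwise_append.1 (isCArray_iff_pairwise.1 hC).2).2.1
      (List.mem_singleton_self _)
    omega
  have hbp : b ≤ p.2 := hge p (by simp)
  have hS₀ : (S₀.map Prod.snd).count b = 0 := by
    refine List.count_eq_zero.2 fun hx => ?_
    have hsub : [b, p.2, q.2].Sublist ((S₀ ++ [p, q]).map Prod.snd) := by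
      simpa using (List.singleton_sublist.2 hx).append (List.Sublist.refl [p.2, q.2])
    have := hN.2 _ hsub (by simp; omega)
    simp at this
  simp only [List.map_append, List.count_append, hS₀, List.map_cons, List.map_nil,
    List.count_cons, List.count_nil, beq_iff_eq] at hb
  split_ifs at hb <;> omega

theorem exists_eq_append_double {S : List (ℕ × ℕ)} (hC : IsCArray S) (hN : IsNormal S)
    {a b : ℕ} (hle : ∀ p ∈ S, p.1 ≤ a) (hge : ∀ p ∈ S, b ≤ p.2)
    (ha : cntA S a = 2) (hb : cntA S b = 2) : ∃ S₀, S = S₀ ++ [(a, b), (a, b)] := by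
  have ha_snd : (S.map Prod.snd).count a = 0 :=
    List.count_eq_zero.2 fun hx => by
      obtain ⟨x, hxS, hxa⟩ := List.mem_map.1 hx
      exact absurd (hC.1 x hxS) (by have := hle x hxS; omega)
  have hb_fst : (S.map Prod.fst).count b = 0 :=
    List.count_eq_zero.2 fun hx => by
      obtain ⟨x, hxS, hxb⟩ := List.mem_map.1 hx
      exact absurd (hC.1 x hxS) (by have := hge x hxS; omega)
  rw [cntA_eq] at ha hb
  have hlen : 2 ≤ S.length := by
    simpa [ha_snd, ← ha] using List.count_le_length (a := a) (l := S.map Prod.fst)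
  obtain ⟨S₀, p, q, rfl⟩ : ∃ S₀ p q, S = S₀ ++ [p, q] := by
    obtain ⟨S₀, l, rfl, hl⟩ : ∃ S₀ l, S = S₀ ++ l ∧ l.length = 2 :=
      ⟨S.take (S.length - 2), S.drop (S.length - 2), (List.take_append_drop _ _).symm,
        by simp; omega⟩
    obtain ⟨p, q, rfl⟩ := List.length_eq_two.1 hl
    exact ⟨S₀, p, q, rfl⟩
  obtain ⟨hpa, hqa⟩ := fst_eq_of_count_fst_eq_two hC hle (by omega)
  obtain ⟨hpb, hqb⟩ := snd_eq_of_count_snd_eq_two hC hN (hpa.trans hqa.symm) hge (by omega)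
  rw [show p = (a, b) from Prod.ext hpa hpb, show q = (a, b) from Prod.ext hqa hqb]
  exact ⟨S₀, rfl⟩

end Peel

theorem exists_eq_append_ladder {c b : ℕ} (hbc : b ≤ c) {f : ℕ → ℕ}
    (hf : ∀ v, f v ≠ 0 → b < v ∧ v ≤ c) {m : ℕ} (hm : m ≤ b) {S : List (ℕ × ℕ)}
    (hC : IsCArray S) (hN : IsNormal S) (hS : ∀ v, cntA S v = f v + cntA (ladder c b m) v) :
    ∃ S', S = S' ++ ladder c b m := by
  induction m generalizing S with
  | zero => exact ⟨S, by simp [ladder]⟩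
  | succ m ih =>
    have hS' (v : ℕ) := (hS v).trans (by rw [cntA_ladder hm])
    have hrange (v : ℕ) (hv : 0 < cntA S v) : b - m ≤ v ∧ v ≤ c + 1 + m := by
      have := hf v
      rw [hS'] at hv
      split_ifs at hv <;> omega
    obtain ⟨S₀, rfl⟩ := exists_eq_append_double hC hN
      (fun p hp => (hrange _ (cntA_fst_pos hp)).2) (fun p hp => (hrange _ (cntA_snd_pos hp)).1)
      (by have := hf (c + 1 + m); rw [hS']; split_ifs <;> omega)
      (by have := hf (b - m); rw [hS']; split_ifs <;> omega)
    have hsub := List.sublist_append_left S₀ [(c + 1 + m, b - m), (c + 1 + m, b - m)]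
    obtain ⟨S', rfl⟩ := ih (by omega) (hC.sublist hsub) (hN.sublist hsub) fun v => by
      have := hS v
      rw [ladder_succ, cntA_append, cntA_append] at this
      omega
    exact ⟨S', by rw [ladder_succ, List.append_assoc]⟩

theorem contentRSR_le_two (r s k v : ℕ) : contentRSR r s k v ≤ 2 := by
  unfold contentRSR
  split_ifs <;> omega

theorem contentRSR_eq {r s k : ℕ} (hk : k = 2 * r + 2 * s) (v : ℕ) :
    contentRSR r s k v =
      (if r + 1 ≤ v ∧ v ≤ r + 2 * s then 1 else 0) + cntA (sbarArr r k) v := by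
  rw [sbarArr_eq_ladder, cntA_ladder le_rfl]
  unfold contentRSR
  split_ifs <;> omega

theorem exists_eq_append_sbarArr {r s k : ℕ} (hk : k = 2 * r + 2 * s) {S : List (ℕ × ℕ)}
    (hC : IsCArray S) (hN : IsNormal S) (hS : ∀ v, cntA S v = contentRSR r s k v) :
    ∃ S', (IsCArray S' ∧ IsNormal S' ∧
        ∀ v, cntA S' v = if r + 1 ≤ v ∧ v ≤ r + 2 * s then 1 else 0) ∧
      S = S' ++ sbarArr r k := by
  obtain ⟨S', rfl⟩ := exists_eq_append_ladder (c := k - r) (by omega)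
    (fun v hv => by split_ifs at hv <;> omega) le_rfl hC hN
    fun v => (hS v).trans (contentRSR_eq hk v)
  have hsub := List.sublist_append_left S' (sbarArr r k)
  refine ⟨S', ⟨hC.sublist hsub, hN.sublist hsub, fun v => ?_⟩, rfl⟩
  have := (hS v).trans (contentRSR_eq hk v)
  rw [cntA_append] at this
  exact Nat.add_right_cancel this

def shift (r : ℕ) (T : List (ℕ × ℕ)) : List (ℕ × ℕ) :=
  T.map (Prod.map (· + r) (· + r))

section Shift

variable {r : ℕ}

theorem shift_injective : Function.Injective (shift r) :=
  List.map_injective_iff.2 ((add_left_injective r).prodMap (add_left_injective r))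

theorem map_fst_shift (T : List (ℕ × ℕ)) :
    (shift r T).map Prod.fst = (T.map Prod.fst).map (· + r) := by
  simp [shift]

theorem map_snd_shift (T : List (ℕ × ℕ)) :
    (shift r T).map Prod.snd = (T.map Prod.snd).map (· + r) := by
  simp [shift]

theorem cntA_shift (T : List (ℕ × ℕ)) (v : ℕ) :
    cntA (shift r T) v = if r ≤ v then cntA T (v - r) else 0 := by
  split_ifs with hv
  · obtain ⟨u, rfl⟩ := Nat.exists_eq_add_of_le' hv
    rw [Nat.add_sub_cancel, cntA_eq, cntA_eq, map_fst_shift, map_snd_shift,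
      List.count_map_of_injective _ _ (add_left_injective r),
      List.count_map_of_injective _ _ (add_left_injective r)]
  · refine List.count_eq_zero.2 fun hmem => hv ?_
    simp only [shift, List.map_map, List.mem_append, List.mem_map] at hmem
    rcases hmem with ⟨x, -, rfl⟩ | ⟨x, -, rfl⟩ <;> simp

theorem isCArray_shift_iff {T : List (ℕ × ℕ)} : IsCArray (shift r T) ↔ IsCArray T := by
  simp only [isCArray_iff_pairwise, shift, List.forall_mem_map, List.pairwise_map, ColLE,
    Prod.map_fst, Prod.map_snd, add_lt_add_iff_right, add_left_inj, add_le_add_iff_right]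

theorem isNormal_shift_iff {T : List (ℕ × ℕ)} : IsNormal (shift r T) ↔ IsNormal T := by
  have hcnt : (∀ v, cntA (shift r T) v ≤ 2) ↔ ∀ v, cntA T v ≤ 2 := by
    refine ⟨fun h v => by simpa [cntA_shift] using h (v + r), fun h v => ?_⟩
    rw [cntA_shift]
    split_ifs
    exacts [h _, by omega]
  have hpw (t : List ℕ) : (t.map (· + r)).Pairwise (· ≤ ·) ↔ t.Pairwise (· ≤ ·) := by
    simp [List.pairwise_map]
  refine and_congr hcnt ⟨fun h t ht hts => ?_, fun h t ht hts => ?_⟩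
  · have := h _ (by rw [map_snd_shift]; exact ht.map _) ((hpw t).2 hts)
    rwa [List.length_map] at this
  · rw [map_snd_shift] at ht
    obtain ⟨t₀, ht₀, rfl⟩ := List.sublist_map_iff.1 ht
    rw [List.length_map]
    exact h t₀ ht₀ ((hpw t₀).1 hts)

theorem exists_eq_shift {S : List (ℕ × ℕ)} (hS : ∀ v < r, cntA S v = 0) :
    ∃ T, S = shift r T := by
  refine ⟨S.map (Prod.map (· - r) (· - r)), ?_⟩
  rw [shift, List.map_map]
  conv_lhs => rw [← List.map_id S]
  refine List.map_congr_left fun p hp => ?_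
  have h₁ := cntA_fst_pos hp
  have h₂ := cntA_snd_pos hp
  have : r ≤ p.1 := not_lt.1 fun h => by simp_all
  have : r ≤ p.2 := not_lt.1 fun h => by simp_all
  ext <;> simp <;> omega

end Shift

theorem shift_append_sbarArr {r s k : ℕ} (hk : k = 2 * r + 2 * s) {T : List (ℕ × ℕ)}
    (hC : IsCArray T) (hN : IsNormal T)
    (hT : ∀ v, cntA T v = if 1 ≤ v ∧ v ≤ 2 * s then 1 else 0) :
    IsCArray (shift r T ++ sbarArr r k) ∧ IsNormal (shift r T ++ sbarArr r k) ∧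
      ∀ v, cntA (shift r T ++ sbarArr r k) v = contentRSR r s k v := by
  have hcnt (v : ℕ) : cntA (shift r T ++ sbarArr r k) v = contentRSR r s k v := by
    rw [cntA_append, contentRSR_eq hk, cntA_shift, hT]
    split_ifs <;> omega
  have hrange (v : ℕ) (hv : 0 < cntA T v) : 1 ≤ v ∧ v ≤ 2 * s := by
    rw [hT] at hv
    split_ifs at hv with h
    exacts [h, by omega]
  refine ⟨(isCArray_shift_iff.2 hC).append (isCArray_ladder (by omega) r) fun p hp q hq => ?_,
    (isNormal_shift_iff.2 hN).append (isNormal_ladder (by omega) le_rfl)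
      (fun v => (hcnt v).trans_le (contentRSR_le_two r s k v)) fun p hp q hq => ?_, hcnt⟩ <;>
  · obtain ⟨p₀, hp₀, rfl⟩ := List.mem_map.1 hp
    obtain ⟨j, hj, rfl⟩ := mem_ladder.1 hq
    have := hrange _ (cntA_fst_pos hp₀)
    have := hrange _ (cntA_snd_pos hp₀)
    simp only [Prod.map_fst, Prod.map_snd]
    omega

/-- every normal c-array of content
`(2^r, 1^{2s}, 2^r)` decomposes uniquely as `S = S' * S̄` with `S'` a multilinear
normal c-array on the values `{r+1, …, r+2s}`; consequently the number of normal
c-arrays of this content equals the number of multilinear normal c-arrays on `2s` values. -/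
theorem normal_carray_decomposition (r s : ℕ) (k : ℕ) (hk : k = 2 * r + 2 * s) :
    (∀ S : List (ℕ × ℕ),
      IsCArray S ∧ IsNormal S ∧ (∀ v, cntA S v = contentRSR r s k v) →
      ∃! S' : List (ℕ × ℕ),
        (IsCArray S' ∧ IsNormal S' ∧
          (∀ v, cntA S' v = if r + 1 ≤ v ∧ v ≤ r + 2 * s then 1 else 0)) ∧
        S = S' ++ sbarArr r k) ∧
    Nat.card {S : List (ℕ × ℕ) // IsCArray S ∧ IsNormal S ∧
        (∀ v, cntA S v = contentRSR r s k v)} =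
    Nat.card {S : List (ℕ × ℕ) // IsCArray S ∧ IsNormal S ∧
        (∀ v, cntA S v = if 1 ≤ v ∧ v ≤ 2 * s then 1 else 0)} := by
  refine ⟨fun S ⟨hC, hN, hS⟩ => ?_, ?_⟩
  · obtain ⟨S', hS', rfl⟩ := exists_eq_append_sbarArr hk hC hN hS
    exact ⟨S', ⟨hS', rfl⟩, fun T ⟨_, hT⟩ => List.append_cancel_right hT.symm⟩
  refine (Nat.card_eq_of_bijective (fun T => ⟨shift r T.1 ++ sbarArr r k,
    shift_append_sbarArr hk T.2.1 T.2.2.1 T.2.2.2⟩) ⟨fun T₁ T₂ h => ?_, fun S => ?_⟩).symm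
  · exact Subtype.ext (shift_injective (List.append_cancel_right (congrArg Subtype.val h)))
  obtain ⟨S, hC, hN, hS⟩ := S
  obtain ⟨S', ⟨hC', hN', hS'⟩, rfl⟩ := exists_eq_append_sbarArr hk hC hN hS
  obtain ⟨T, rfl⟩ := exists_eq_shift (r := r) fun v hv => by
    rw [hS']
    split_ifs <;> omega
  refine ⟨⟨T, isCArray_shift_iff.1 hC', isNormal_shift_iff.1 hN', fun v => ?_⟩, rfl⟩
  have := hS' (v + r)
  rw [cntA_shift, if_pos (Nat.le_add_left r v), Nat.add_sub_cancel] at this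
  rw [this]
  split_ifs <;> omega
end

section
/- The number of normal c-arrays of content (2, 2, ..., 2) (q twos) is 1 if q is even and 0 if q is odd; when q = 2r is even the unique such array has columns (r+j, r+1−j) each repeated twice, for j = 1, ..., r. -/
/-- The unique candidate array with columns `(r+j, r+1-j)`, each repeated twice. -/
def sbar0 (r : ℕ) : List (ℕ × ℕ) :=
  (List.range r).flatMap (fun j => [(r + 1 + j, r - j), (r + 1 + j, r - j)])

/-!
In a normal c-array of content `(2, …, 2)` on `1, …, q` with `q > 0`, the value `q` can only be
a top entry, so the last two columns have top `q`; the value `1` can only be a bottom entry, and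
a `1` left of those two columns would start a weakly increasing triple of bottoms, so both last
columns are `(q, 1)`. Deleting them and lowering every entry by one gives a normal c-array of
content `(2, …, 2)` on `1, …, q - 2`, and conversely. Induction on `q` leaves only even `q` and
the array `sbar0 (q / 2)`.
-/

namespace CArray

def HasTwosContent (q : ℕ) (S : List (ℕ × ℕ)) : Prop :=
  ∀ v, cntA S v = if 1 ≤ v ∧ v ≤ q then 2 else 0

def IsNormalTwos (q : ℕ) (S : List (ℕ × ℕ)) : Prop :=
  IsCArray S ∧ IsNormal S ∧ HasTwosContent q S

def HasNoWeakTriple (l : List ℕ) : Prop :=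
  ∀ t : List ℕ, t.Sublist l → t.Pairwise (· ≤ ·) → t.length ≤ 2

def shiftUp (S : List (ℕ × ℕ)) : List (ℕ × ℕ) := S.map (Prod.map (· + 1) (· + 1))

def extend (q : ℕ) (S : List (ℕ × ℕ)) : List (ℕ × ℕ) :=
  shiftUp S ++ [(q + 2, 1), (q + 2, 1)]

theorem isCArray_iff {S : List (ℕ × ℕ)} :
    IsCArray S ↔ (∀ p ∈ S, p.2 < p.1) ∧
      S.IsChain (fun p q : ℕ × ℕ => p.1 < q.1 ∨ (p.1 = q.1 ∧ p.2 ≤ q.2)) := Iff.rfl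

theorem isNormal_iff {S : List (ℕ × ℕ)} :
    IsNormal S ↔ (∀ v, cntA S v ≤ 2) ∧ HasNoWeakTriple (S.map Prod.snd) := Iff.rfl

theorem isNormalTwos_iff {q : ℕ} {S : List (ℕ × ℕ)} :
    IsNormalTwos q S ↔ IsCArray S ∧ IsNormal S ∧ HasTwosContent q S := Iff.rfl

section Content

variable {q : ℕ} {S : List (ℕ × ℕ)}

theorem cntA_eq_count_add (S : List (ℕ × ℕ)) (v : ℕ) :
    cntA S v = (S.map Prod.fst).count v + (S.map Prod.snd).count v :=
  List.count_append ..

theorem cntA_append (S T : List (ℕ × ℕ)) (v : ℕ) :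
    cntA (S ++ T) v = cntA S v + cntA T v := by
  simp only [cntA_eq_count_add, List.map_append, List.count_append]
  ring

theorem map_fst_shiftUp (S : List (ℕ × ℕ)) :
    (shiftUp S).map Prod.fst = (S.map Prod.fst).map (· + 1) := by
  simp [shiftUp, Function.comp_def]

theorem map_snd_shiftUp (S : List (ℕ × ℕ)) :
    (shiftUp S).map Prod.snd = (S.map Prod.snd).map (· + 1) := by
  simp [shiftUp, Function.comp_def]

theorem cntA_shiftUp (S : List (ℕ × ℕ)) (v : ℕ) :
    cntA (shiftUp S) v = if v = 0 then 0 else cntA S (v - 1) := by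
  have count_map_succ (l : List ℕ) :
      (l.map (· + 1)).count v = if v = 0 then 0 else l.count (v - 1) := by
    split_ifs with hv
    · simpa [hv] using List.count_eq_zero.mpr (by simp)
    · obtain ⟨w, rfl⟩ := Nat.exists_eq_succ_of_ne_zero hv
      exact List.count_map_of_injective l _ (fun a b h => by omega) w
  simp only [cntA_eq_count_add, map_fst_shiftUp, map_snd_shiftUp, count_map_succ]
  split_ifs <;> rfl

theorem cntA_extend (q : ℕ) (S : List (ℕ × ℕ)) (v : ℕ) :
    cntA (extend q S) v = (if v = 0 then 0 else cntA S (v - 1)) +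
      (if v = q + 2 then 2 else 0) + (if v = 1 then 2 else 0) := by
  rw [extend, cntA_append, cntA_shiftUp]
  simp only [cntA, List.map_cons, List.map_nil, List.cons_append, List.nil_append,
    List.count_cons, List.count_nil, beq_iff_eq]
  split_ifs <;> omega

theorem hasTwosContent_extend_iff : HasTwosContent (q + 2) (extend q S) ↔ HasTwosContent q S := by
  constructor
  · intro h v
    have hv := h (v + 1)
    rw [cntA_extend, if_neg (Nat.succ_ne_zero v), Nat.add_sub_cancel] at hv
    split_ifs at hv ⊢ <;> omega
  · intro h v
    rw [cntA_extend, h]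
    split_ifs <;> omega

theorem HasTwosContent.mem_bounds (h : HasTwosContent q S) {v : ℕ}
    (hv : v ∈ S.map Prod.fst ∨ v ∈ S.map Prod.snd) : 1 ≤ v ∧ v ≤ q := by
  by_contra hout
  have hpos : 0 < cntA S v := by
    rw [cntA_eq_count_add]
    rcases hv with hv | hv <;> have := List.count_pos_iff.mpr hv <;> omega
  rw [h v, if_neg hout] at hpos
  exact hpos.false

theorem HasTwosContent.fst_le (h : HasTwosContent q S) {p : ℕ × ℕ} (hp : p ∈ S) :
    p.1 ≤ q :=
  (h.mem_bounds (.inl (List.mem_map_of_mem hp))).2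

theorem HasTwosContent.one_le_snd (h : HasTwosContent q S) {p : ℕ × ℕ} (hp : p ∈ S) :
    1 ≤ p.2 :=
  (h.mem_bounds (.inr (List.mem_map_of_mem hp))).1

theorem HasTwosContent.cntA_le_two (h : HasTwosContent q S) (v : ℕ) : cntA S v ≤ 2 := by
  rw [h v]
  split_ifs <;> omega

end Content

section WeakTriple

variable {l : List ℕ}

theorem hasNoWeakTriple_map_succ : HasNoWeakTriple (l.map (· + 1)) ↔ HasNoWeakTriple l := by
  constructor
  · intro h t ht hsort
    simpa using h (t.map (· + 1)) (ht.map _) (List.pairwise_map.mpr (hsort.imp (by omega)))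
  · intro h t ht hsort
    obtain ⟨t', ht', rfl⟩ := List.sublist_map_iff.mp ht
    simpa using h t' ht' ((List.pairwise_map.mp hsort).imp (by omega))

theorem hasNoWeakTriple_append_pair {a : ℕ} (hl : ∀ x ∈ l, a < x) :
    HasNoWeakTriple (l ++ [a, a]) ↔ HasNoWeakTriple l := by
  refine ⟨fun h t ht => h t (ht.trans (List.sublist_append_left _ _)), fun h t ht hsort => ?_⟩
  obtain ⟨t₁, t₂, rfl, ht₁, ht₂⟩ := List.sublist_append_iff.mp ht
  rcases t₁ with _ | ⟨x, t₁⟩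
  · simpa using ht₂.length_le
  rcases t₂ with _ | ⟨y, t₂⟩
  · simpa using h _ ht₁ (by simpa using hsort)
  have hxy : x ≤ y := List.pairwise_append.mp hsort |>.2.2 x (by simp) y (by simp)
  have hy : y = a := by simpa using ht₂.subset List.mem_cons_self
  have hx : a < x := hl x (ht₁.subset List.mem_cons_self)
  omega

end WeakTriple

section Shape

variable {q : ℕ} {S : List (ℕ × ℕ)}

theorem isCArray_shiftUp : IsCArray (shiftUp S) ↔ IsCArray S := by
  simp only [isCArray_iff, shiftUp, List.mem_map, forall_exists_index, and_imp,
    forall_apply_eq_imp_iff₂, Prod.map_fst, Prod.map_snd, add_lt_add_iff_right,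
    List.isChain_map, add_left_inj, Nat.add_le_add_iff_right]

theorem isCArray_append_pair {a b : ℕ} (hba : b < a) (hS : ∀ p ∈ S, p.1 < a) :
    IsCArray (S ++ [(a, b), (a, b)]) ↔ IsCArray S := by
  simp only [isCArray_iff, List.isChain_append, List.mem_append, List.mem_cons,
    List.not_mem_nil, or_false]
  constructor
  · rintro ⟨hlt, hchain, -⟩
    exact ⟨fun p hp => hlt p (.inl hp), hchain⟩
  · rintro ⟨hlt, hchain⟩
    refine ⟨?_, hchain, by simp, fun x hx y hy => ?_⟩
    · rintro p (hp | rfl | rfl)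
      exacts [hlt p hp, hba, hba]
    · simp only [List.head?_cons, Option.mem_def, Option.some.injEq] at hy
      exact .inl (hy ▸ hS x (List.mem_of_mem_getLast? hx))

theorem IsCArray.pairwise_fst (h : IsCArray S) : (S.map Prod.fst).Pairwise (· ≤ ·) := by
  refine List.isChain_iff_pairwise.mp ((List.isChain_map _).mpr ((isCArray_iff.mp h).2.imp ?_))
  rintro p q (hpq | ⟨hpq, -⟩) <;> omega

theorem isNormalTwos_extend_iff : IsNormalTwos (q + 2) (extend q S) ↔ IsNormalTwos q S := by
  rw [isNormalTwos_iff, isNormalTwos_iff, hasTwosContent_extend_iff, ← and_assoc, ← and_assoc]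
  refine and_congr_left fun hcont => ?_
  have hcont' := hasTwosContent_extend_iff.mpr hcont
  have hbottoms : (extend q S).map Prod.snd = (S.map Prod.snd).map (· + 1) ++ [1, 1] := by
    simp [extend, map_snd_shiftUp]
  have hfst : ∀ p ∈ shiftUp S, p.1 < q + 2 := by
    simp only [shiftUp, List.mem_map]
    rintro _ ⟨p, hp, rfl⟩
    have := hcont.fst_le hp
    simp only [Prod.map_fst]
    omega
  have hsnd : ∀ x ∈ (S.map Prod.snd).map (· + 1), 1 < x := by
    simp only [List.map_map, List.mem_map, Function.comp_apply]
    rintro _ ⟨p, hp, rfl⟩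
    have := hcont.one_le_snd hp
    omega
  rw [extend, isCArray_append_pair (by omega) hfst, isCArray_shiftUp, isNormal_iff, isNormal_iff,
    ← extend, hbottoms, hasNoWeakTriple_append_pair hsnd, hasNoWeakTriple_map_succ]
  simp only [hcont.cntA_le_two, hcont'.cntA_le_two, implies_true, true_and]

end Shape

section Decomposition

variable {q : ℕ} {S : List (ℕ × ℕ)}

theorem exists_eq_shiftUp (h : ∀ p ∈ S, 0 < p.1 ∧ 0 < p.2) : ∃ S', S = shiftUp S' := by
  induction S with
  | nil => exact ⟨[], rfl⟩
  | cons p S ih =>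
    obtain ⟨S', rfl⟩ := ih fun p' hp' => h p' (List.mem_cons_of_mem _ hp')
    obtain ⟨h₁, h₂⟩ := h p List.mem_cons_self
    refine ⟨(p.1 - 1, p.2 - 1) :: S', ?_⟩
    simp only [shiftUp, List.map_cons, List.cons.injEq, and_true]
    ext <;> simp only [Prod.map_fst, Prod.map_snd] <;> omega

theorem exists_eq_concat_fst_eq (hsort : (S.map Prod.fst).Pairwise (· ≤ ·))
    (hle : ∀ p ∈ S, p.1 ≤ q) (hq : q ∈ S.map Prod.fst) :
    ∃ S₀ c, S = S₀ ++ [c] ∧ c.1 = q := by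
  obtain ⟨S₀, c, rfl⟩ : ∃ S₀ c, S = S₀ ++ [c] := by
    rcases List.eq_nil_or_concat S with rfl | ⟨S₀, c, rfl⟩
    · simp at hq
    · exact ⟨S₀, c, List.concat_eq_append ..⟩
  refine ⟨S₀, c, rfl, le_antisymm (hle c (by simp)) ?_⟩
  rw [List.map_append, List.map_singleton, List.pairwise_append] at hsort
  rw [List.map_append, List.map_singleton, List.mem_append, List.mem_singleton] at hq
  rcases hq with hq | rfl
  exacts [hsort.2.2 q hq c.1 (by simp), le_rfl]

theorem exists_eq_append_pair_fst_eq (hsort : (S.map Prod.fst).Pairwise (· ≤ ·))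
    (hle : ∀ p ∈ S, p.1 ≤ q) (hcount : (S.map Prod.fst).count q = 2) :
    ∃ S₀ c d, S = S₀ ++ [c, d] ∧ c.1 = q ∧ d.1 = q := by
  obtain ⟨S₁, d, rfl, hd⟩ :=
    exists_eq_concat_fst_eq hsort hle (List.count_pos_iff.mp (by omega))
  have hcount₁ : (S₁.map Prod.fst).count q = 1 := by
    simpa [List.count_append, hd] using hcount
  obtain ⟨S₀, c, rfl, hc⟩ := exists_eq_concat_fst_eq
    (hsort.sublist ((List.sublist_append_left _ _).map _))
    (fun p hp => hle p (List.mem_append_left _ hp)) (List.count_pos_iff.mp (by omega))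
  exact ⟨S₀, c, d, by simp, hc, hd⟩

theorem HasTwosContent.count_fst_self (hcont : HasTwosContent q S) (hlt : ∀ p ∈ S, p.2 < p.1)
    (hq : 0 < q) : (S.map Prod.fst).count q = 2 := by
  have hsnd : (S.map Prod.snd).count q = 0 := List.count_eq_zero.mpr fun hmem => by
    obtain ⟨p, hp, rfl⟩ := List.mem_map.mp hmem
    have := hcont.fst_le hp
    have := hlt p hp
    omega
  have := hcont q
  rw [cntA_eq_count_add, if_pos ⟨hq, le_rfl⟩] at this
  omega

theorem HasTwosContent.count_snd_one (hcont : HasTwosContent q S) (hlt : ∀ p ∈ S, p.2 < p.1)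
    (hq : 0 < q) : (S.map Prod.snd).count 1 = 2 := by
  have hfst : (S.map Prod.fst).count 1 = 0 := List.count_eq_zero.mpr fun hmem => by
    obtain ⟨p, hp, hp1⟩ := List.mem_map.mp hmem
    have := hcont.one_le_snd hp
    have := hlt p hp
    omega
  have := hcont 1
  rw [cntA_eq_count_add, if_pos ⟨le_rfl, hq⟩] at this
  omega

theorem IsNormalTwos.exists_eq_extend (h : IsNormalTwos q S) (hq : 0 < q) :
    ∃ q' S', q = q' + 2 ∧ S = extend q' S' := by
  obtain ⟨hca, hnorm, hcont⟩ := h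
  have hlt := (isCArray_iff.mp hca).1
  have hone := hcont.count_snd_one hlt hq
  obtain ⟨S₀, c, d, rfl, hc, hd⟩ := exists_eq_append_pair_fst_eq (IsCArray.pairwise_fst hca)
    (fun _ => hcont.fst_le) (hcont.count_fst_self hlt hq)
  have hcd : c.2 ≤ d.2 := by
    have := (List.isChain_append.mp (isCArray_iff.mp hca).2).2.1
    rcases List.isChain_pair.mp this with h | h <;> omega
  have hbottoms : (S₀ ++ [c, d]).map Prod.snd = S₀.map Prod.snd ++ [c.2, d.2] := by simp
  have hone₀ : 1 ∉ S₀.map Prod.snd := fun hmem => by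
    have := hcont.one_le_snd (p := c) (by simp)
    have := hnorm.2 [1, c.2, d.2]
      (hbottoms ▸ (List.singleton_sublist.mpr hmem).append (List.Sublist.refl _))
      (by simp; omega)
    simp at this
  rw [hbottoms, List.count_append, List.count_eq_zero.mpr hone₀, zero_add] at hone
  obtain ⟨hc₂, hd₂⟩ : 1 = c.2 ∧ 1 = d.2 := by simpa using List.count_eq_length.mp hone
  obtain ⟨S', rfl⟩ := exists_eq_shiftUp (S := S₀) fun p hp => by
    have := hcont.one_le_snd (p := p) (by simp [hp])
    have := hlt p (by simp [hp])
    omega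
  have := hlt c (by simp)
  refine ⟨q - 2, S', by omega, ?_⟩
  have hc' : c = (q, 1) := Prod.ext hc hc₂.symm
  have hd' : d = (q, 1) := Prod.ext hd hd₂.symm
  rw [extend, Nat.sub_add_cancel (by omega), hc', hd']

end Decomposition

theorem sbar0_succ (r : ℕ) : sbar0 (r + 1) = extend (2 * r) (sbar0 r) := by
  rw [sbar0, sbar0, extend, shiftUp, List.range_succ, List.flatMap_append, List.map_flatMap]
  congr 1
  · refine List.flatMap_congr fun j hj => ?_
    have := List.mem_range.mp hj
    simp only [List.map_cons, List.map_nil, Prod.map, List.cons.injEq, Prod.mk.injEq]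
    refine ⟨⟨?_, ?_⟩, ⟨?_, ?_⟩, trivial⟩ <;> omega
  · simp only [List.flatMap_cons, List.flatMap_nil, List.append_nil, List.cons.injEq,
      Prod.mk.injEq]
    refine ⟨⟨?_, ?_⟩, ⟨?_, ?_⟩, trivial⟩ <;> omega

theorem isNormalTwos_sbar0 (r : ℕ) : IsNormalTwos (2 * r) (sbar0 r) := by
  induction r with
  | zero =>
    refine ⟨⟨by simp [sbar0], List.isChain_nil⟩, ⟨fun v => by simp [cntA, sbar0], ?_⟩,
      fun v => by simp [cntA, sbar0]; omega⟩
    intro t ht _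
    simp [List.sublist_nil.mp (by simpa [sbar0] using ht)]
  | succ r ih =>
    rw [sbar0_succ, Nat.mul_succ]
    exact isNormalTwos_extend_iff.mpr ih

theorem IsNormalTwos.eq_sbar0 {q : ℕ} {S : List (ℕ × ℕ)} (h : IsNormalTwos q S) :
    ∃ r, q = 2 * r ∧ S = sbar0 r := by
  induction q using Nat.strong_induction_on generalizing S with
  | _ q ih =>
  rcases Nat.eq_zero_or_pos q with rfl | hq
  · refine ⟨0, rfl, List.eq_nil_iff_forall_not_mem.mpr fun p hp => ?_⟩
    have := h.2.2.one_le_snd hp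
    have := h.2.2.fst_le hp
    have := h.1.1 p hp
    omega
  · obtain ⟨q', S', rfl, rfl⟩ := h.exists_eq_extend hq
    obtain ⟨r, rfl, rfl⟩ := ih q' (by omega) (isNormalTwos_extend_iff.mp h)
    exact ⟨r + 1, by ring, (sbar0_succ r).symm⟩

theorem isNormalTwos_iff_eq_sbar0 {q : ℕ} {S : List (ℕ × ℕ)} :
    IsNormalTwos q S ↔ ∃ r, q = 2 * r ∧ S = sbar0 r := by
  refine ⟨IsNormalTwos.eq_sbar0, ?_⟩
  rintro ⟨r, rfl, rfl⟩
  exact isNormalTwos_sbar0 r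

end CArray

/-- the number of normal c-arrays of content `(2, …, 2)` (`q` twos)
is `1` if `q` is even and `0` if `q` is odd; for `q = 2r` the unique such array
has columns `(r+j, r+1-j)` each repeated twice. -/
theorem count_normal_carrays_all_twos (q : ℕ) :
    (Nat.card {S : List (ℕ × ℕ) // IsCArray S ∧ IsNormal S ∧
        (∀ v, cntA S v = if 1 ≤ v ∧ v ≤ q then 2 else 0)} =
      if Even q then 1 else 0) ∧
    (∀ r : ℕ, q = 2 * r →
      ∀ S : List (ℕ × ℕ),
        (IsCArray S ∧ IsNormal S ∧
          (∀ v, cntA S v = if 1 ≤ v ∧ v ≤ q then 2 else 0)) ↔ S = sbar0 r) := by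
  have key (S : List (ℕ × ℕ)) :
      (IsCArray S ∧ IsNormal S ∧ ∀ v, cntA S v = if 1 ≤ v ∧ v ≤ q then 2 else 0) ↔
        ∃ r, q = 2 * r ∧ S = sbar0 r :=
    CArray.isNormalTwos_iff_eq_sbar0
  have unique_of_eq (r : ℕ) (hr : q = 2 * r) (S : List (ℕ × ℕ)) :
      (∃ r', q = 2 * r' ∧ S = sbar0 r') ↔ S = sbar0 r :=
    ⟨fun ⟨r', hr', hS⟩ => by rwa [show r = r' by omega], fun hS => ⟨r, hr, hS⟩⟩
  refine ⟨?_, fun r hr S => (key S).trans (unique_of_eq r hr S)⟩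
  rw [Nat.card_congr (Equiv.subtypeEquivRight key)]
  split_ifs with hq
  · obtain ⟨r, hr⟩ := hq
    rw [Nat.card_congr (Equiv.subtypeEquivRight (unique_of_eq r (by omega))), Nat.card_unique]
  · have : IsEmpty {S // ∃ r, q = 2 * r ∧ S = sbar0 r} :=
      ⟨fun ⟨_, r, hr, _⟩ => hq ⟨r, by omega⟩⟩
    exact Nat.card_of_isEmpty
end

section
/- In M_{1,1}(E) with char F ≠ 2, if f is a polynomial whose variables are disjoint from x_1,...,x_{2r}, and f·f_{S̄} is a weak polynomial identity for (M_{1,1}(E), W), where f_{S̄} = ∏_{j=1}^r [x_{r+j}, x_{r+1−j}]² (the polynomial of the normal c-array with columns (r+1,r),(r+1,r),...,(2r,1),(2r,1)), then f itself is a weak polynomial identity for (M_{1,1}(E), W). -/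
/-- Weak polynomial identity for `(M_{1,1}(E), W)`: the polynomial vanishes under
every substitution of the variables by supertraceless matrices. -/
def IsWeakId (F : Type*) [Field F] (f : FreeAlgebra F ℕ) : Prop :=
  ∀ σ : ℕ → Matrix (Fin 2) (Fin 2) (GrAlg F), (∀ n, InW (σ n)) →
    FreeAlgebra.lift F σ f = 0

/-- The proper polynomial `f_{S̄} = ∏_{j=1}^{r} [x_{r+j}, x_{r+1-j}]²`
(variables `x₁, …, x_{2r}` are represented by the indices `0, …, 2r-1`). -/
def fSbar (F : Type*) [Field F] (r : ℕ) : FreeAlgebra F ℕ :=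
  ((List.range r).map (fun j =>
    (FreeAlgebra.ι F (r + j) * FreeAlgebra.ι F (r - 1 - j) -
     FreeAlgebra.ι F (r - 1 - j) * FreeAlgebra.ι F (r + j)) ^ 2)).prod

/-!
Substitute odd antidiagonal matrices in fresh Grassmann generators `e_0, …, e_{4r-1}` for the
variables of `f_{S̄}`, and the given supertraceless matrices with every generator index shifted
by `4r` for the other variables. Each commutator becomes the scalar `e_a e_d + e_b e_c`, whose
square is `2 e_a e_b e_c e_d`, so `f_{S̄}` evaluates to `2^r e_0 ⋯ e_{4r-1}` while `f` evaluates
to the shift of its original value. An element free of `e_0, …, e_{4r-1}` (equivalently, killed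
by the right contractions along them) which annihilates `e_0 ⋯ e_{4r-1}` is zero, and the shift
is injective.
-/

namespace List

theorem prod_map_const_smul {ι S M : Type*} [CommMonoid S] [Monoid M] [MulAction S M]
    [IsScalarTower S M M] [SMulCommClass S M M] (c : S) (f : ι → M) (l : List ι) :
    (l.map fun i => c • f i).prod = c ^ l.length • (l.map f).prod := by
  induction l with
  | nil => simp
  | cons i l ih => rw [map_cons, prod_cons, ih, smul_mul_smul_comm, ← pow_succ']; rfl

theorem prod_map_range_mul {M : Type*} [Monoid M] (f : ℕ → M) (k n : ℕ) :
    ((range (k * n)).map f).prod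
      = ((range n).map fun j => ((range k).map fun i => f (k * j + i)).prod).prod := by
  induction n with
  | zero => simp
  | succ n ih => simp [Nat.mul_succ, range_add, range_succ, ih, Function.comp_def]

end List

theorem FreeAlgebra.algHom_lift_apply {R X A B : Type*} [CommSemiring R] [Semiring A]
    [Algebra R A] [Semiring B] [Algebra R B] (φ : A →ₐ[R] B) (σ : X → A)
    (g : FreeAlgebra R X) :
    φ (lift R σ g) = lift R (fun x => φ (σ x)) g := by
  rw [← AlgHom.comp_apply, ← lift_comp_ι (φ.comp (lift R σ))]
  simp [Function.comp_def]

namespace CliffordAlgebra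

variable {R M : Type*} [CommRing R] [AddCommGroup M] [Module R M] {Q : QuadraticForm R M}

theorem contractRight_mul (x y : CliffordAlgebra Q) (d : Module.Dual R M) :
    contractRight (x * y) d = x * contractRight y d + contractRight x d * involute y := by
  induction y using CliffordAlgebra.induction generalizing x with
  | algebraMap r => simp [contractRight_mul_algebraMap]
  | ι m =>
    rw [contractRight_mul_ι, contractRight_ι, involute_ι, mul_neg,
      ← Algebra.commutes, ← Algebra.smul_def, sub_eq_add_neg]
  | mul a b iha ihb =>
    rw [← mul_assoc, ihb, iha, map_mul involute, ihb a]
    noncomm_ring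
  | add a b iha ihb =>
    rw [mul_add, map_add, LinearMap.add_apply, iha, ihb, map_add, map_add, LinearMap.add_apply]
    noncomm_ring

theorem contractRight_mul_eq_zero {x y : CliffordAlgebra Q} {d : Module.Dual R M}
    (hx : contractRight x d = 0) (hy : contractRight y d = 0) : contractRight (x * y) d = 0 := by
  rw [contractRight_mul, hx, hy, mul_zero, zero_mul, add_zero]

theorem eq_zero_of_mul_ι_eq_zero {x : CliffordAlgebra Q} {d : Module.Dual R M} {m : M}
    (hx : contractRight x d = 0) (hm : d m = 1) (h : x * ι Q m = 0) : x = 0 := by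
  simpa [hx, hm, h] using (contractRight_mul_ι (d := d) m x).symm

end CliffordAlgebra

namespace ExteriorAlgebra

variable {R M N : Type*} [CommRing R] [AddCommGroup M] [Module R M] [AddCommGroup N] [Module R N]

theorem map_mem_evenOdd (f : M →ₗ[R] N) {n : ZMod 2} {x : ExteriorAlgebra R M}
    (hx : x ∈ CliffordAlgebra.evenOdd 0 n) : map f x ∈ CliffordAlgebra.evenOdd 0 n := by
  have hle : (CliffordAlgebra.evenOdd (0 : QuadraticForm R M) n).map (map f).toLinearMap
      ≤ CliffordAlgebra.evenOdd 0 n := by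
    simp_rw [CliffordAlgebra.evenOdd, Submodule.map_iSup, Submodule.map_pow]
    refine iSup_mono fun i => pow_le_pow_left' ?_ _
    exact (ι_range_map_map f).trans_le (LinearMap.map_le_range)
  exact hle ⟨x, hx, rfl⟩

theorem commute_ι_ι_mul_ι (x y z : M) : Commute (ι R x) (ι R y * ι R z) := by
  have swap (a b : M) : ι R a * ι R b = -(ι R b * ι R a) :=
    eq_neg_of_add_eq_zero_left (ι_add_mul_swap a b)
  show ι R x * (ι R y * ι R z) = ι R y * ι R z * ι R x
  rw [← mul_assoc, swap x y, neg_mul, mul_assoc, swap x z, mul_neg, neg_neg, mul_assoc]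

theorem ι_mul_ι_add_ι_mul_ι_sq (a b c d : M) :
    (ι R a * ι R d + ι R b * ι R c) ^ 2 = (2 : R) • (ι R a * ι R b * ι R c * ι R d) := by
  have hsq (x y : M) : ι R x * ι R y * (ι R x * ι R y) = 0 := by
    rw [← mul_assoc, (commute_ι_ι_mul_ι x x y).symm.eq, ← mul_assoc, ι_sq_zero, zero_mul,
      zero_mul]
  have hcross : ι R a * ι R d * (ι R b * ι R c) = ι R a * ι R b * ι R c * ι R d := by
    rw [mul_assoc, (commute_ι_ι_mul_ι d b c).eq, ← mul_assoc, ← mul_assoc]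
  have hcomm : Commute (ι R a * ι R d) (ι R b * ι R c) :=
    (commute_ι_ι_mul_ι b a d).symm.mul_right (commute_ι_ι_mul_ι c a d).symm
  rw [sq, add_mul, mul_add, mul_add, hsq, hsq, ← hcomm.eq, hcross, two_smul]
  abel

end ExteriorAlgebra

theorem Matrix.antidiag_mul_sub_mul {R : Type*} [Ring R] {a b c d : R}
    (hcb : c * b = -(b * c)) (hda : d * a = -(a * d)) :
    !![0, a; b, 0] * !![0, c; d, 0] - !![0, c; d, 0] * !![0, a; b, 0]
      = Matrix.scalar (Fin 2) (a * d + b * c) := by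
  ext i j
  fin_cases i <;> fin_cases j <;> simp [hcb, hda]; abel

open CliffordAlgebra

section Grassmann

variable {F : Type*} [Field F]

noncomputable def shiftHom (F : Type*) [Field F] (N : ℕ) : GrAlg F →ₐ[F] GrAlg F :=
  ExteriorAlgebra.map (Finsupp.lmapDomain F F (· + N))

theorem shiftHom_injective (N : ℕ) : Function.Injective (shiftHom F N) :=
  ExteriorAlgebra.map_injective_field <| LinearMap.ker_eq_bot.mpr <|
    Finsupp.mapDomain_injective (add_left_injective N)

theorem contractRight_eGen_of_ne {i j : ℕ} (h : j ≠ i) :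
    contractRight (eGen F j) (Finsupp.lapply i) = 0 := by
  simp [eGen, ExteriorAlgebra.ι, h]

theorem contractRight_shiftHom {N i : ℕ} (hi : i < N) (w : GrAlg F) :
    contractRight (shiftHom F N w) (Finsupp.lapply i) = 0 := by
  induction w using CliffordAlgebra.induction with
  | algebraMap r => rw [AlgHom.commutes]; exact contractRight_algebraMap _ _ _
  | ι v =>
    have hv : Finsupp.mapDomain (· + N) v i = 0 :=
      Finsupp.mapDomain_of_notMem_range _ _ (by rintro ⟨a, ha⟩; simp only at ha; omega)
    simp [shiftHom, ExteriorAlgebra.map_apply_ι, ExteriorAlgebra.ι, hv]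
  | mul a b ha hb => rw [map_mul]; exact contractRight_mul_eq_zero ha hb
  | add a b ha hb => rw [map_add, map_add, LinearMap.add_apply, ha, hb, add_zero]

theorem contractRight_prod_eGen_of_notMem {i : ℕ} {l : List ℕ} (h : i ∉ l) :
    contractRight (l.map (eGen F)).prod (Finsupp.lapply i) = 0 := by
  induction l with
  | nil => exact contractRight_one _ _
  | cons j l ih =>
    rw [List.mem_cons, not_or] at h
    exact contractRight_mul_eq_zero (contractRight_eGen_of_ne (Ne.symm h.1)) (ih h.2)

theorem eq_zero_of_mul_prod_eGen_eq_zero {z : GrAlg F} {l : List ℕ} (hl : l.Nodup)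
    (hz : ∀ i ∈ l, contractRight z (Finsupp.lapply i) = 0)
    (h : z * (l.map (eGen F)).prod = 0) : z = 0 := by
  induction l using List.reverseRecOn with
  | nil => simpa using h
  | append_singleton l i ih =>
    obtain ⟨hl, -, hil⟩ := List.nodup_append.mp hl
    have hi : i ∉ l := fun hmem => hil i hmem i (List.mem_singleton_self i) rfl
    refine ih hl (fun j hj => hz j (List.mem_append_left _ hj)) ?_
    refine eq_zero_of_mul_ι_eq_zero (d := Finsupp.lapply i) (m := Finsupp.single i 1)
      (contractRight_mul_eq_zero (hz i (by simp)) (contractRight_prod_eGen_of_notMem hi))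
      (by simp) ?_
    have hlast : z * (l.map (eGen F)).prod * eGen F i = 0 := by
      simpa [List.prod_append, mul_assoc] using h
    exact hlast

theorem eq_zero_of_shiftHom_mul_prod_eGen_eq_zero {N : ℕ} {w : GrAlg F}
    (h : shiftHom F N w * ((List.range N).map (eGen F)).prod = 0) : w = 0 := by
  refine shiftHom_injective N (?_ : shiftHom F N w = shiftHom F N 0)
  rw [map_zero]
  exact eq_zero_of_mul_prod_eGen_eq_zero List.nodup_range
    (fun i hi => contractRight_shiftHom (List.mem_range.mp hi) w) h

theorem InW.map_shiftHom {A : Matrix (Fin 2) (Fin 2) (GrAlg F)} (hA : InW A) (N : ℕ) :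
    InW (A.map (shiftHom F N)) :=
  have hev {i : ZMod 2} {x : GrAlg F} (hx : x ∈ Epart F i) : shiftHom F N x ∈ Epart F i :=
    ExteriorAlgebra.map_mem_evenOdd _ hx
  ⟨⟨hev hA.1.1, hev hA.1.2.1, hev hA.1.2.2.1, hev hA.1.2.2.2⟩, congrArg _ hA.2⟩

theorem inW_antidiag_eGen (a b : ℕ) : InW !![0, eGen F a; eGen F b, 0] :=
  ⟨⟨zero_mem _, zero_mem _, ι_mem_evenOdd_one _ _, ι_mem_evenOdd_one _ _⟩, rfl⟩

end Grassmann

section TestSubstitution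

variable {F : Type*} [Field F] (r : ℕ) (σ : ℕ → Matrix (Fin 2) (Fin 2) (GrAlg F))

/-- The variables `x_{r+1+j}` and `x_{r-j}` (indices `r + j` and `r - 1 - j`) of the `j`-th
commutator of `f_{S̄}` receive the generators `e_{4j}, e_{4j+1}` and `e_{4j+2}, e_{4j+3}`;
all other variables are sent to `σ`, shifted past these `4r` generators. -/
noncomputable def testSubst (k : ℕ) : Matrix (Fin 2) (Fin 2) (GrAlg F) :=
  if k < r then !![0, eGen F (4 * (r - 1 - k) + 2); eGen F (4 * (r - 1 - k) + 3), 0]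
  else if k < 2 * r then !![0, eGen F (4 * (k - r)); eGen F (4 * (k - r) + 1), 0]
  else (σ k).map (shiftHom F (4 * r))

variable {r σ}

theorem testSubst_mem_W (hσ : ∀ n, InW (σ n)) (k : ℕ) : InW (testSubst r σ k) := by
  unfold testSubst
  split_ifs
  · exact inW_antidiag_eGen _ _
  · exact inW_antidiag_eGen _ _
  · exact (hσ k).map_shiftHom _

theorem lift_testSubst_commutator_sq {j : ℕ} (hj : j < r) :
    FreeAlgebra.lift F (testSubst r σ)
        ((FreeAlgebra.ι F (r + j) * FreeAlgebra.ι F (r - 1 - j) -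
          FreeAlgebra.ι F (r - 1 - j) * FreeAlgebra.ι F (r + j)) ^ 2)
      = Matrix.scalar (Fin 2)
          ((2 : F) • ((List.range 4).map fun i => eGen F (4 * j + i)).prod) := by
  have hx : testSubst r σ (r + j) = !![0, eGen F (4 * j); eGen F (4 * j + 1), 0] := by
    simp [testSubst, show ¬ r + j < r by omega, show r + j < 2 * r by omega]
  have hy : testSubst r σ (r - 1 - j) = !![0, eGen F (4 * j + 2); eGen F (4 * j + 3), 0] := by
    simp [testSubst, show r - 1 - j < r by omega, show r - 1 - (r - 1 - j) = j by omega]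
  have swap (a b : ℕ) : eGen F a * eGen F b = -(eGen F b * eGen F a) :=
    eq_neg_of_add_eq_zero_left (ExteriorAlgebra.ι_add_mul_swap _ _)
  simp only [map_pow, map_sub, map_mul, FreeAlgebra.lift_ι_apply, hx, hy]
  rw [Matrix.antidiag_mul_sub_mul (swap _ _) (swap _ _), ← map_pow, eGen, eGen, eGen, eGen,
    ExteriorAlgebra.ι_mul_ι_add_ι_mul_ι_sq]
  simp [List.range_succ, mul_assoc, eGen]

theorem lift_testSubst_fSbar :
    FreeAlgebra.lift F (testSubst r σ) (fSbar F r)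
      = Matrix.scalar (Fin 2) ((2 : F) ^ r • ((List.range (4 * r)).map (eGen F)).prod) := by
  simp only [fSbar, map_list_prod, List.map_map, Function.comp_def]
  rw [List.map_congr_left fun j hj =>
    lift_testSubst_commutator_sq (σ := σ) (List.mem_range.mp hj)]
  change (List.map (Matrix.scalar (Fin 2) ∘ _) _).prod = _
  rw [← List.map_map, ← map_list_prod, List.prod_map_const_smul, List.length_range,
    List.prod_map_range_mul]

theorem lift_testSubst_shift (g : FreeAlgebra F ℕ) :
    FreeAlgebra.lift F (testSubst r σ)
        (FreeAlgebra.lift F (fun n => FreeAlgebra.ι F (n + 2 * r)) g)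
      = (FreeAlgebra.lift F σ
          (FreeAlgebra.lift F (fun n => FreeAlgebra.ι F (n + 2 * r)) g)).map
            (shiftHom F (4 * r)) := by
  have htail (n : ℕ) :
      testSubst r σ (n + 2 * r) = (σ (n + 2 * r)).map (shiftHom F (4 * r)) := by
    simp [testSubst, show ¬ n + 2 * r < r by omega]
  simp only [FreeAlgebra.algHom_lift_apply, FreeAlgebra.lift_ι_apply, htail]
  exact (FreeAlgebra.algHom_lift_apply (shiftHom F (4 * r)).mapMatrix _ g).symm

end TestSubstitution

theorem weak_identity_cancellation_general (F : Type*) [Field F]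
    (h2 : (2 : F) ≠ 0) (r : ℕ) (g : FreeAlgebra F ℕ) :
    letI f : FreeAlgebra F ℕ :=
      FreeAlgebra.lift F (fun n => FreeAlgebra.ι F (n + 2 * r)) g
    IsWeakId F (f * fSbar F r) → IsWeakId F f := by
  intro h σ hσ
  have hτ := h (testSubst r σ) (testSubst_mem_W hσ)
  rw [map_mul, lift_testSubst_shift, lift_testSubst_fSbar] at hτ
  ext i j
  have hij := congr_fun₂ hτ i j
  rw [Matrix.scalar_apply, Matrix.mul_diagonal, Matrix.map_apply, mul_smul_comm,
    Matrix.zero_apply, smul_eq_zero] at hij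
  exact eq_zero_of_shiftHom_mul_prod_eGen_eq_zero (hij.resolve_left (pow_ne_zero r h2))

/-- if `f` is a polynomial whose variables are disjoint from
`x₁, …, x_{2r}` and `f · f_{S̄}` is a weak identity for `(M_{1,1}(E), W)`,
then so is `f`. -/
theorem weak_identity_cancellation (F : Type*) [Field F] [Infinite F]
    (h2 : (2 : F) ≠ 0) (r : ℕ) (g : FreeAlgebra F ℕ) :
    letI f : FreeAlgebra F ℕ :=
      FreeAlgebra.lift F (fun n => FreeAlgebra.ι F (n + 2 * r)) g
    IsWeakId F (f * fSbar F r) → IsWeakId F f :=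
  weak_identity_cancellation_general F h2 r g
end

section
/- Let m = u_0 z_{σ(1)} u_1 z_{σ(2)} ⋯ z_{σ(q)} u_q be a multilinear monomial in even variables y_i (forming the words u_j) and odd variables z_1,...,z_q, and define m* = sgn(σ)·m. Then for any superalgebra A = A_0 ⊕ A_1, a multilinear polynomial f is a Z_2-graded identity of A if and only if f* is a Z_2-graded identity of the Grassmann envelope A⊗̂E = (A_0 ⊗ E_0) ⊕ (A_1 ⊗ E_1). -/
noncomputable section
open scoped TensorProduct

/-- The number of inversions of a list of naturals. -/
def invCount : List ℕ → ℕ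
  | [] => 0
  | a :: t => t.countP (fun b => decide (b < a)) + invCount t

/-- The word of odd variables (the values `≥ p`) read along the monomial
`x_{π(0)} x_{π(1)} ⋯` (the variables `0, …, p-1` are even, `p, …, p+q-1` odd). -/
def oddWord (p : ℕ) {n : ℕ} (π : Equiv.Perm (Fin n)) : List ℕ :=
  (List.ofFn (fun i => ((π i : Fin n) : ℕ))).filter (fun v => decide (p ≤ v))

/-- Evaluation of the general multilinear polynomial
`f = Σ_π c(π) x_{π(0)} ⋯ x_{π(n-1)}` at `x`. -/
def evalML (F : Type*) [Field F] {R : Type*} [Ring R] [Algebra F R] {n : ℕ}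
    (c : Equiv.Perm (Fin n) → F) (x : Fin n → R) : R :=
  ∑ π : Equiv.Perm (Fin n), c π • (List.ofFn (fun i => x (π i))).prod

/-- The homogeneous part `A_i ⊗ E_i` of the Grassmann envelope `A ⊗̂ E`. -/
def envPart (F : Type*) [Field F] {A : Type*} [Ring A] [Algebra F A]
    (M : Submodule F A) (i : ZMod 2) : Submodule F (A ⊗[F] GrAlg F) :=
  Submodule.span F {x | ∃ a ∈ M, ∃ e ∈ Epart F i, x = a ⊗ₜ[F] e}

/-!
For homogeneous `a_i ∈ A` and `e_i ∈ E` of the parity of the `i`-th variable, even elements of `E`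
are central and odd ones anticommute, so reordering `e_{π 0} ⋯ e_{π (n-1)}` into `e_0 ⋯ e_{n-1}`
costs exactly the sign of the permutation that `π` induces on the odd variables. Hence
`f*(a_0 ⊗ e_0, …) = f(a) ⊗ e_0 ⋯ e_{n-1}`. As `f*` is multilinear and the homogeneous parts of
`A ⊗̂ E` are spanned by such pure tensors, an identity of `A` gives one of `A ⊗̂ E`. Conversely,
choosing `e_i = 1` for the even variables and distinct generators of `E` for the odd ones makes
`e_0 ⋯ e_{n-1} ≠ 0`, so `f(a) ⊗ e_0 ⋯ e_{n-1} = 0` forces `f(a) = 0`.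
-/

section SignedReordering

variable {R : Type*} [Ring R] (P : ℕ → Prop) [DecidablePred P] {e : ℕ → R}

theorem mul_prod_map_eq_smul_prod_map_orderedInsert
    (hcomm : ∀ i j, ¬ (P i ∧ P j) → e i * e j = e j * e i)
    (hanti : ∀ i j, P i → P j → e i * e j = -(e j * e i)) (a : ℕ) :
    ∀ L : List ℕ, L.Pairwise (· ≤ ·) →
      e a * (L.map e).prod =
        (-1 : ℤ) ^ L.countP (fun b => P a ∧ P b ∧ b < a) •
          ((L.orderedInsert (· ≤ ·) a).map e).prod
  | [], _ => by simp
  | b :: L, hL => by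
    obtain ⟨hbL, hL⟩ := List.pairwise_cons.mp hL
    by_cases hab : a ≤ b
    · have hcount : (b :: L).countP (fun b => P a ∧ P b ∧ b < a) = 0 :=
        List.countP_eq_zero.mpr fun c hc => by
          have : b ≤ c := (List.mem_cons.mp hc).elim (·.ge) (hbL c)
          simp only [decide_eq_true_eq, not_and, not_lt]
          omega
      rw [List.orderedInsert_cons, if_pos hab, hcount, pow_zero, one_smul,
        List.map_cons (l := b :: L), List.prod_cons]
    · have IH := mul_prod_map_eq_smul_prod_map_orderedInsert hcomm hanti a L hL
      rw [List.orderedInsert_cons, if_neg hab, List.map_cons, List.prod_cons, List.map_cons,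
        List.prod_cons, ← mul_assoc]
      by_cases hodd : P a ∧ P b
      · rw [hanti a b hodd.1 hodd.2, List.countP_cons_of_pos (by simp [hodd]; omega), neg_mul,
          mul_assoc, IH, mul_smul_comm, pow_succ, mul_neg_one, neg_smul]
      · rw [hcomm a b hodd, List.countP_cons_of_neg (by simp only [decide_eq_true_eq]; tauto),
          mul_assoc, IH, mul_smul_comm]

theorem prod_map_eq_smul_prod_map_insertionSort
    (hcomm : ∀ i j, ¬ (P i ∧ P j) → e i * e j = e j * e i)
    (hanti : ∀ i j, P i → P j → e i * e j = -(e j * e i)) :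
    ∀ l : List ℕ,
      (l.map e).prod = (-1 : ℤ) ^ invCount (l.filter (P ·)) •
        ((l.insertionSort (· ≤ ·)).map e).prod
  | [] => by simp [invCount]
  | a :: l => by
    rw [List.insertionSort, List.map_cons, List.prod_cons,
      prod_map_eq_smul_prod_map_insertionSort hcomm hanti l, mul_smul_comm,
      mul_prod_map_eq_smul_prod_map_orderedInsert P hcomm hanti a _
        (List.pairwise_insertionSort _ l),
      smul_smul, ← pow_add, (List.perm_insertionSort _ l).countP_eq]
    congr 2
    by_cases ha : P a
    · rw [List.filter_cons_of_pos (by simpa using ha), invCount, List.countP_filter]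
      simp [ha, add_comm, Bool.and_comm]
    · rw [List.filter_cons_of_neg (by simpa using ha)]
      simp [ha]

end SignedReordering

namespace ExteriorAlgebra
section GradedCommutativity

variable {R M : Type*} [CommRing R] [AddCommGroup M] [Module R M]

local notation "ι₀" => CliffordAlgebra.ι (0 : QuadraticForm R M)

theorem ι_mul_ι_anticomm (v w : M) : ι₀ v * ι₀ w = -(ι₀ w * ι₀ v) :=
  CliffordAlgebra.ι_mul_ι_comm_of_isOrtho (QuadraticMap.IsOrtho.all v w)

theorem ι_mul_ι_mul_comm (v w : M) (y : ExteriorAlgebra R M) :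
    ι₀ v * ι₀ w * y = y * (ι₀ v * ι₀ w) := by
  induction y using CliffordAlgebra.induction with
  | algebraMap r => exact (Algebra.commutes r _).symm
  | ι u => rw [mul_assoc, ι_mul_ι_anticomm w u, mul_neg, ← mul_assoc, ι_mul_ι_anticomm v u,
      neg_mul, neg_neg, mul_assoc]
  | mul a b ha hb => rw [← mul_assoc, ha, mul_assoc, hb, ← mul_assoc]
  | add a b ha hb => rw [mul_add, ha, hb, add_mul]

theorem mul_comm_of_mem_evenOdd_zero {x : ExteriorAlgebra R M}
    (hx : x ∈ CliffordAlgebra.evenOdd (0 : QuadraticForm R M) 0) (y : ExteriorAlgebra R M) :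
    x * y = y * x := by
  induction x, hx using CliffordAlgebra.even_induction with
  | algebraMap r => exact Algebra.commutes r y
  | add a b _ _ ha hb => rw [add_mul, ha, hb, mul_add]
  | ι_mul_ι_mul v w z _ hz => rw [mul_assoc, hz, ← mul_assoc, ι_mul_ι_mul_comm, mul_assoc]

theorem ι_mul_anticomm_of_mem_evenOdd_one (v : M) {y : ExteriorAlgebra R M}
    (hy : y ∈ CliffordAlgebra.evenOdd (0 : QuadraticForm R M) 1) : ι₀ v * y = -(y * ι₀ v) := by
  induction y, hy using CliffordAlgebra.odd_induction with
  | ι w => exact ι_mul_ι_anticomm v w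
  | add a b _ _ ha hb => rw [mul_add, ha, hb, add_mul, neg_add]
  | ι_mul_ι_mul u w z _ hz =>
    rw [← mul_assoc, ← ι_mul_ι_mul_comm, mul_assoc, hz, mul_neg, ← mul_assoc]

theorem mul_anticomm_of_mem_evenOdd_one {x y : ExteriorAlgebra R M}
    (hx : x ∈ CliffordAlgebra.evenOdd (0 : QuadraticForm R M) 1)
    (hy : y ∈ CliffordAlgebra.evenOdd (0 : QuadraticForm R M) 1) : x * y = -(y * x) := by
  induction x, hx using CliffordAlgebra.odd_induction with
  | ι v => exact ι_mul_anticomm_of_mem_evenOdd_one v hy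
  | add a b _ _ ha hb => rw [add_mul, ha, hb, mul_add, neg_add]
  | ι_mul_ι_mul u w z _ hz =>
    rw [mul_assoc, hz, mul_neg, ← mul_assoc, ← mul_assoc, ι_mul_ι_mul_comm, mul_assoc, mul_assoc]

end GradedCommutativity

theorem ιMulti_ne_zero {K E : Type*} [Field K] [AddCommGroup E] [Module K E]
    {n : ℕ} {v : Fin n → E} (hv : LinearIndependent K v) : ExteriorAlgebra.ιMulti K n v ≠ 0 := by
  let s : Set.powersetCard (Fin n) n := ⟨Finset.univ, Finset.card_fin n⟩
  have hs : ⇑(Set.powersetCard.ofFinEmbEquiv.symm s) = id :=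
    (Set.powersetCard.ofFinEmbEquiv.symm s).strictMono.eq_id
  have := (exteriorPower.ιMulti_family_linearIndependent_field (n := n) hv).ne_zero s
  rw [exteriorPower.ιMulti_family, hs, Function.comp_id] at this
  exact fun h => this (Subtype.ext h)

end ExteriorAlgebra

theorem eq_zero_of_tmul_eq_zero {K V W : Type*} [Field K] [AddCommGroup V] [Module K V]
    [AddCommGroup W] [Module K W] {v : V} {w : W} (hw : w ≠ 0) (h : v ⊗ₜ[K] w = 0) : v = 0 := by
  obtain ⟨φ, hφ⟩ := Module.Projective.exists_dual_eq_one K hw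
  simpa [hφ] using congrArg (TensorProduct.rid K V ∘ φ.lTensor V) h

theorem Algebra.TensorProduct.list_prod_ofFn_tmul {K A B : Type*} [CommRing K] [Ring A]
    [Algebra K A] [Ring B] [Algebra K B] :
    ∀ {n : ℕ} (f : Fin n → A) (g : Fin n → B),
      (List.ofFn fun i => f i ⊗ₜ[K] g i).prod = (List.ofFn f).prod ⊗ₜ[K] (List.ofFn g).prod
  | 0, _, _ => by simp [Algebra.TensorProduct.one_def]
  | n + 1, f, g => by
    simp only [List.ofFn_succ, List.prod_cons, list_prod_ofFn_tmul (n := n), tmul_mul_tmul]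

theorem MultilinearMap.eq_zero_of_forall_mem_span {K M N ι : Type*} [CommSemiring K]
    [AddCommMonoid M] [Module K M] [AddCommMonoid N] [Module K N] [Fintype ι] [DecidableEq ι]
    (f : MultilinearMap K (fun _ : ι => M) N) (S : ι → Set M)
    (hf : ∀ x, (∀ i, x i ∈ S i) → f x = 0) (x : ι → M) (hx : ∀ i, x i ∈ Submodule.span K (S i)) :
    f x = 0 := by
  suffices H : ∀ s : Finset ι, ∀ x : ι → M, (∀ i, x i ∈ Submodule.span K (S i)) →
      (∀ i ∉ s, x i ∈ S i) → f x = 0 from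
    H Finset.univ x hx fun i hi => absurd (Finset.mem_univ i) hi
  intro s
  induction s using Finset.induction_on with
  | empty => exact fun x _ hS => hf x fun i => hS i (Finset.notMem_empty i)
  | @insert j s _ ih =>
    intro x hx hS
    suffices ∀ v ∈ Submodule.span K (S j), f (Function.update x j v) = 0 by
      simpa using this (x j) (hx j)
    intro v hv
    induction hv using Submodule.span_induction with
    | mem v hv =>
      refine ih _ (fun i => ?_) (fun i hi => ?_)
      · rcases eq_or_ne i j with rfl | hij
        · simpa using Submodule.subset_span hv
        · simpa [hij] using hx i
      · rcases eq_or_ne i j with rfl | hij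
        · simpa using hv
        · simpa [hij] using hS i (by simp [hij, hi])
    | zero => exact f.map_update_zero x j
    | add u v _ _ hu hv => rw [f.map_update_add, hu, hv, add_zero]
    | smul r u _ hu => rw [f.map_update_smul, hu, smul_zero]

def evalMLMultilinear (F : Type*) [Field F] (R : Type*) [Ring R] [Algebra F R] {n : ℕ}
    (c : Equiv.Perm (Fin n) → F) : MultilinearMap F (fun _ : Fin n => R) R :=
  ∑ π : Equiv.Perm (Fin n), c π • (MultilinearMap.mkPiAlgebraFin F n R).domDomCongr π

theorem evalMLMultilinear_apply (F : Type*) [Field F] {R : Type*} [Ring R] [Algebra F R] {n : ℕ}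
    (c : Equiv.Perm (Fin n) → F) (x : Fin n → R) : evalMLMultilinear F R c x = evalML F c x := by
  simp [evalMLMultilinear, evalML]

theorem insertionSort_ofFn_coe_perm_eq_range {n : ℕ} (π : Equiv.Perm (Fin n)) :
    (List.ofFn fun i => (π i : ℕ)).insertionSort (· ≤ ·) = List.range n := by
  have hperm : (List.ofFn fun i => (π i : ℕ)).Perm (List.range n) := by
    have := π.ofFn_comp_perm Fin.val
    rwa [List.ofFn_eq_map (f := Fin.val), List.map_coe_finRange_eq_range] at this
  exact ((List.perm_insertionSort _ _).trans hperm).eq_of_pairwise'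
    (List.pairwise_insertionSort _ _) List.pairwise_le_range

theorem list_prod_ofFn_perm_eq_neg_one_pow_smul {R M : Type*} [CommRing R] [AddCommGroup M]
    [Module R M] (p : ℕ) {n : ℕ} (e : Fin n → ExteriorAlgebra R M)
    (he : ∀ i : Fin n, ((i : ℕ) < p → e i ∈ CliffordAlgebra.evenOdd (0 : QuadraticForm R M) 0) ∧
      (p ≤ (i : ℕ) → e i ∈ CliffordAlgebra.evenOdd (0 : QuadraticForm R M) 1))
    (π : Equiv.Perm (Fin n)) :
    (List.ofFn fun i => e (π i)).prod =
      (-1 : ℤ) ^ invCount (oddWord p π) • (List.ofFn e).prod := by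
  -- `0` lies in both parts, so the extension by `0` still obeys the sign rules
  set ee : ℕ → ExteriorAlgebra R M := fun k => if h : k < n then e ⟨k, h⟩ else 0 with hee
  have hee_val (i : Fin n) : ee i = e i := dif_pos i.is_lt
  have hpar (k : ℕ) : (k < p → ee k ∈ CliffordAlgebra.evenOdd (0 : QuadraticForm R M) 0) ∧
      (p ≤ k → ee k ∈ CliffordAlgebra.evenOdd (0 : QuadraticForm R M) 1) := by
    by_cases hk : k < n
    · simpa only [hee, dif_pos hk] using he ⟨k, hk⟩
    · simp only [hee, dif_neg hk, Submodule.zero_mem, implies_true, and_self]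
  have hcomm (i j : ℕ) (hij : ¬ (p ≤ i ∧ p ≤ j)) : ee i * ee j = ee j * ee i := by
    rcases not_and_or.mp hij with hi | hj
    · exact ExteriorAlgebra.mul_comm_of_mem_evenOdd_zero ((hpar i).1 (not_le.mp hi)) _
    · exact (ExteriorAlgebra.mul_comm_of_mem_evenOdd_zero ((hpar j).1 (not_le.mp hj)) _).symm
  have hanti (i j : ℕ) (hi : p ≤ i) (hj : p ≤ j) : ee i * ee j = -(ee j * ee i) :=
    ExteriorAlgebra.mul_anticomm_of_mem_evenOdd_one ((hpar i).2 hi) ((hpar j).2 hj)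
  have hsorted : (List.range n).map ee = List.ofFn e := by
    rw [← List.map_coe_finRange_eq_range, List.map_map, List.ofFn_eq_map]
    exact List.map_congr_left fun i _ => hee_val i
  have hword : (List.ofFn fun i => e (π i)) = (List.ofFn fun i => (π i : ℕ)).map ee := by
    simp only [List.map_ofFn, Function.comp_def, hee_val]
  rw [hword, prod_map_eq_smul_prod_map_insertionSort (p ≤ ·) hcomm hanti,
    insertionSort_ofFn_coe_perm_eq_range, hsorted]
  rfl

/-- The coefficients of `f*`: the parity of `invCount (oddWord p π)` is that of the permutation
which the monomial `π` induces on the odd variables. -/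
def starCoeff {F : Type*} [Field F] (p : ℕ) {n : ℕ} (c : Equiv.Perm (Fin n) → F) :
    Equiv.Perm (Fin n) → F :=
  fun π => (-1 : F) ^ invCount (oddWord p π) * c π

theorem evalML_starCoeff_tmul (F : Type*) [Field F] {A M : Type*} [Ring A] [Algebra F A]
    [AddCommGroup M] [Module F M] (p : ℕ) {n : ℕ} (c : Equiv.Perm (Fin n) → F)
    (a : Fin n → A) (e : Fin n → ExteriorAlgebra F M)
    (he : ∀ i : Fin n, ((i : ℕ) < p → e i ∈ CliffordAlgebra.evenOdd (0 : QuadraticForm F M) 0) ∧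
      (p ≤ (i : ℕ) → e i ∈ CliffordAlgebra.evenOdd (0 : QuadraticForm F M) 1)) :
    evalML F (starCoeff p c) (fun i => a i ⊗ₜ[F] e i) =
      evalML F c a ⊗ₜ[F] (List.ofFn e).prod := by
  simp only [evalML, TensorProduct.sum_tmul]
  refine Finset.sum_congr rfl fun π _ => ?_
  set k := invCount (oddWord p π)
  have hsign : (-1 : F) ^ k * (-1 : F) ^ k = 1 := by rw [← mul_pow]; simp
  rw [Algebra.TensorProduct.list_prod_ofFn_tmul (fun i => a (π i)) (fun i => e (π i)),
    list_prod_ofFn_perm_eq_neg_one_pow_smul p e he π, ← Int.cast_smul_eq_zsmul F,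
    TensorProduct.tmul_smul, smul_smul, TensorProduct.smul_tmul', starCoeff]
  congr 2
  push_cast
  rw [mul_right_comm, hsign, one_mul]

theorem evalML_starCoeff_eq_zero_of_forall_evalML_eq_zero (F : Type*) [Field F] {A : Type*}
    [Ring A] [Algebra F A] (A0 A1 : Submodule F A) (p : ℕ) {n : ℕ} (c : Equiv.Perm (Fin n) → F)
    (hA : ∀ a : Fin n → A,
      (∀ i : Fin n, ((i : ℕ) < p → a i ∈ A0) ∧ (p ≤ (i : ℕ) → a i ∈ A1)) → evalML F c a = 0)
    (x : Fin n → A ⊗[F] GrAlg F)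
    (hx : ∀ i : Fin n,
      ((i : ℕ) < p → x i ∈ envPart F A0 0) ∧ (p ≤ (i : ℕ) → x i ∈ envPart F A1 1)) :
    evalML F (starCoeff p c) x = 0 := by
  classical
  let S (i : Fin n) : Set (A ⊗[F] GrAlg F) := {t | ∃ a e, t = a ⊗ₜ[F] e ∧
    ((i : ℕ) < p → a ∈ A0 ∧ e ∈ Epart F 0) ∧ (p ≤ (i : ℕ) → a ∈ A1 ∧ e ∈ Epart F 1)}
  have hspan (i : Fin n) : x i ∈ Submodule.span F (S i) := by
    by_cases hi : (i : ℕ) < p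
    · refine Submodule.span_mono ?_ ((hx i).1 hi)
      rintro t ⟨a, ha, e, he, rfl⟩
      exact ⟨a, e, rfl, fun _ => ⟨ha, he⟩, fun h => absurd hi (not_lt.mpr h)⟩
    · refine Submodule.span_mono ?_ ((hx i).2 (not_lt.mp hi))
      rintro t ⟨a, ha, e, he, rfl⟩
      exact ⟨a, e, rfl, fun h => absurd h hi, fun _ => ⟨ha, he⟩⟩
  rw [← evalMLMultilinear_apply]
  refine MultilinearMap.eq_zero_of_forall_mem_span _ S (fun y hy => ?_) x hspan
  choose a e hy hgr using hy
  rw [evalMLMultilinear_apply, funext hy,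
    evalML_starCoeff_tmul F p c a e fun i => ⟨fun h => ((hgr i).1 h).2, fun h => ((hgr i).2 h).2⟩,
    hA a fun i => ⟨fun h => ((hgr i).1 h).1, fun h => ((hgr i).2 h).1⟩, TensorProduct.zero_tmul]

theorem list_prod_ofFn_ite_ι_single_ne_zero (F : Type*) [Field F] (p q : ℕ) :
    (List.ofFn fun i : Fin (p + q) => if (i : ℕ) < p then 1 else
      ExteriorAlgebra.ι F (Finsupp.single (i : ℕ) (1 : F))).prod ≠ 0 := by
  have hind : LinearIndependent F fun j : Fin q => Finsupp.single (p + j : ℕ) (1 : F) :=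
    (Finsupp.linearIndependent_single_one F ℕ).comp _
      ((add_right_injective p).comp Fin.val_injective)
  convert ExteriorAlgebra.ιMulti_ne_zero hind using 1
  simp [List.ofFn_add, ExteriorAlgebra.ιMulti_apply]

theorem evalML_eq_zero_of_forall_evalML_starCoeff_eq_zero (F : Type*) [Field F] {A : Type*}
    [Ring A] [Algebra F A] (A0 A1 : Submodule F A) (p q : ℕ) (c : Equiv.Perm (Fin (p + q)) → F)
    (hE : ∀ x : Fin (p + q) → A ⊗[F] GrAlg F,
      (∀ i : Fin (p + q), ((i : ℕ) < p → x i ∈ envPart F A0 0) ∧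
        (p ≤ (i : ℕ) → x i ∈ envPart F A1 1)) → evalML F (starCoeff p c) x = 0)
    (a : Fin (p + q) → A)
    (ha : ∀ i : Fin (p + q), ((i : ℕ) < p → a i ∈ A0) ∧ (p ≤ (i : ℕ) → a i ∈ A1)) :
    evalML F c a = 0 := by
  let e (i : Fin (p + q)) : GrAlg F :=
    if (i : ℕ) < p then 1 else ExteriorAlgebra.ι F (Finsupp.single (i : ℕ) (1 : F))
  have he (i : Fin (p + q)) :
      ((i : ℕ) < p → e i ∈ Epart F 0) ∧ (p ≤ (i : ℕ) → e i ∈ Epart F 1) := by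
    refine ⟨fun hi => ?_, fun hi => ?_⟩
    · simp only [e, if_pos hi]
      exact SetLike.one_mem_graded (CliffordAlgebra.evenOdd _)
    · simp only [e, if_neg (not_lt.mpr hi)]
      exact CliffordAlgebra.ι_mem_evenOdd_one _ _
  have hx := hE (fun i => a i ⊗ₜ[F] e i) fun i =>
    ⟨fun h => Submodule.subset_span ⟨a i, (ha i).1 h, e i, (he i).1 h, rfl⟩,
      fun h => Submodule.subset_span ⟨a i, (ha i).2 h, e i, (he i).2 h, rfl⟩⟩
  rw [evalML_starCoeff_tmul F p c a e he] at hx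
  exact eq_zero_of_tmul_eq_zero (list_prod_ofFn_ite_ι_single_ne_zero F p q) hx

theorem kemer_grassmann_envelope_general (F : Type*) [Field F]
    {A : Type*} [Ring A] [Algebra F A] (A0 A1 : Submodule F A)
    (p q : ℕ) (c : Equiv.Perm (Fin (p + q)) → F) :
    (∀ x : Fin (p + q) → A,
        (∀ i : Fin (p + q), ((i : ℕ) < p → x i ∈ A0) ∧ (p ≤ (i : ℕ) → x i ∈ A1)) →
        evalML F c x = 0) ↔
    (∀ x : Fin (p + q) → (A ⊗[F] GrAlg F),
        (∀ i : Fin (p + q),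
          ((i : ℕ) < p → x i ∈ envPart F A0 0) ∧ (p ≤ (i : ℕ) → x i ∈ envPart F A1 1)) →
        evalML F (fun π => ((-1 : F) ^ invCount (oddWord p π)) * c π) x = 0) :=
  ⟨evalML_starCoeff_eq_zero_of_forall_evalML_eq_zero F A0 A1 p c,
    evalML_eq_zero_of_forall_evalML_starCoeff_eq_zero F A0 A1 p q c⟩

/-- Kemer: a multilinear polynomial `f` (in `p` even and `q` odd
variables) is a graded identity of the superalgebra `A = A₀ ⊕ A₁` iff `f*`
(each monomial multiplied by the sign of the permutation induced on the odd
variables) is a graded identity of the Grassmann envelope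
`A ⊗̂ E = (A₀ ⊗ E₀) ⊕ (A₁ ⊗ E₁)`. -/
theorem kemer_grassmann_envelope (F : Type*) [Field F] (h2 : (2 : F) ≠ 0)
    {A : Type*} [Ring A] [Algebra F A] (A0 A1 : Submodule F A)
    (h00 : ∀ a ∈ A0, ∀ b ∈ A0, a * b ∈ A0)
    (h01 : ∀ a ∈ A0, ∀ b ∈ A1, a * b ∈ A1)
    (h10 : ∀ a ∈ A1, ∀ b ∈ A0, a * b ∈ A1)
    (h11 : ∀ a ∈ A1, ∀ b ∈ A1, a * b ∈ A0)
    (hone : (1 : A) ∈ A0) (hsup : A0 ⊔ A1 = ⊤) (hinf : A0 ⊓ A1 = ⊥)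
    (p q : ℕ) (c : Equiv.Perm (Fin (p + q)) → F) :
    (∀ x : Fin (p + q) → A,
        (∀ i : Fin (p + q), ((i : ℕ) < p → x i ∈ A0) ∧ (p ≤ (i : ℕ) → x i ∈ A1)) →
        evalML F c x = 0) ↔
    (∀ x : Fin (p + q) → (A ⊗[F] GrAlg F),
        (∀ i : Fin (p + q),
          ((i : ℕ) < p → x i ∈ envPart F A0 0) ∧ (p ≤ (i : ℕ) → x i ∈ envPart F A1 1)) →
        evalML F (fun π => ((-1 : F) ^ invCount (oddWord p π)) * c π) x = 0) :=
  kemer_grassmann_envelope_general F A0 A1 p q c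

end
end

section
/- Partial linearization relation: modulo the ideal generated by [x_1,x_2,x_3] and [x_2,x_1][x_3,x_1][x_4,x_1] (closed under linear substitutions over an infinite field F of char ≠ 2), for any distinct b_1, b_2, b_3 the sum over all σ ∈ S_3 of [x_{a_1}, x_{b_{σ(1)}}][x_{a_2}, x_{b_{σ(2)}}][x_{a_3}, x_{b_{σ(3)}}] is zero; concretely, in M_{1,1}(E), for any supertraceless w_{a_1},w_{a_2},w_{a_3},w_{b_1},w_{b_2},w_{b_3} ∈ W, Σ_{σ∈S_3} [w_{a_1}, w_{b_{σ(1)}}][w_{a_2}, w_{b_{σ(2)}}][w_{a_3}, w_{b_{σ(3)}}] = 0. -/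
/-!
For `u, v ∈ W` the commutator `[u, v]` is the scalar matrix with entry `u₀₁ v₁₀ + u₁₀ v₀₁`.
Products of two odd Grassmann elements are even, hence central, so the sum over `S₃` is the
permanent-like sum `∑ σ, ∏ m, (X m (σ m) + Y m (σ m))` in the commutative center, where
`X i j = b i * c j` and `Y i j = b' i * c' j` with `b, c, b', c'` odd. Expanding the product, each
of the `2³` terms takes its factors from `X` in two rows or from `Y` in two rows, and composing `σ`
with the transposition of those rows flips the sign of the term, because odd elements
anticommute. So the terms cancel in pairs.
-/

open CliffordAlgebra Equiv Finset

section Permutations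

variable {R ι : Type*} [CommRing R] [Fintype ι] [DecidableEq ι]

theorem sum_perm_prod_eq_zero_of_exchange (g : ι → ι → R) {i k : ι} (hik : i ≠ k)
    (hg : ∀ j l, g i j * g k l = -(g i l * g k j)) :
    ∑ σ : Perm ι, ∏ m, g m (σ m) = 0 := by
  have hi : i ∈ (univ : Finset ι) := mem_univ i
  have hk : k ∈ univ.erase i := mem_erase.mpr ⟨hik.symm, mem_univ k⟩
  have split : ∀ τ : Perm ι, ∏ m, g m (τ m) =
      g i (τ i) * (g k (τ k) * ∏ m ∈ (univ.erase i).erase k, g m (τ m)) := fun τ => by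
    rw [← mul_prod_erase _ _ hi, ← mul_prod_erase _ _ hk]
  refine sum_involution (fun σ _ => σ * swap i k) (fun σ _ => ?_) (fun σ _ _ h => ?_)
    (fun _ _ => mem_univ _) (fun σ _ => by simp [mul_assoc])
  · have rest : ∏ m ∈ (univ.erase i).erase k, g m ((σ * swap i k) m) =
        ∏ m ∈ (univ.erase i).erase k, g m (σ m) := by
      refine prod_congr rfl fun m hm => ?_
      obtain ⟨hmk, hmi, -⟩ := mem_erase.mp hm |>.imp_right mem_erase.mp
      rw [Perm.mul_apply, swap_apply_of_ne_of_ne hmi hmk]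
    rw [split, split (σ * swap i k), rest]
    simp only [Perm.mul_apply, swap_apply_left, swap_apply_right]
    linear_combination (∏ m ∈ (univ.erase i).erase k, g m (σ m)) * hg (σ k) (σ i)
  · exact hik (swap_eq_one_iff.mp (mul_left_cancel (a := σ) (h.trans (mul_one σ).symm)))

theorem sum_perm_prod_add_eq_zero (hι : 2 < Fintype.card ι) (x y : ι → ι → R)
    (hx : ∀ i k, i ≠ k → ∀ j l, x i j * x k l = -(x i l * x k j))
    (hy : ∀ i k, i ≠ k → ∀ j l, y i j * y k l = -(y i l * y k j)) :
    ∑ σ : Perm ι, ∏ m, (x m (σ m) + y m (σ m)) = 0 := by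
  simp_rw [Fintype.prod_add, compl_eq_univ_sdiff]
  rw [sum_comm]
  refine sum_eq_zero fun t _ => ?_
  obtain ⟨i, k, hik, hit⟩ := Fintype.exists_ne_map_eq_of_card_lt (· ∈ t) (by simpa using hι)
  have piece : ∀ σ : Perm ι, (∏ m ∈ t, x m (σ m)) * ∏ m ∈ univ \ t, y m (σ m) =
      ∏ m, t.piecewise x y m (σ m) := fun σ => by
    have h := prod_piecewise univ t (fun m => x m (σ m)) (fun m => y m (σ m))
    rw [univ_inter] at h
    rw [← h]
    exact prod_congr rfl fun m _ => by by_cases h : m ∈ t <;> simp [h]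
  simp_rw [piece]
  refine sum_perm_prod_eq_zero_of_exchange _ hik ?_
  by_cases hi : i ∈ t
  · have hk : k ∈ t := (hit ▸ hi : _)
    simpa [piecewise_eq_of_mem _ _ _ hi, piecewise_eq_of_mem _ _ _ hk] using hx i k hik
  · have hk : k ∉ t := (hit ▸ hi : _)
    simpa [piecewise_eq_of_notMem _ _ _ hi, piecewise_eq_of_notMem _ _ _ hk] using hy i k hik

end Permutations

namespace ExteriorAlgebra

variable {R M : Type*} [CommRing R] [AddCommGroup M] [Module R M]

theorem ι_mul_eq_involute_mul (v : M) (x : ExteriorAlgebra R M) :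
    ι R v * x = involute x * ι R v := by
  induction x using CliffordAlgebra.induction with
  | algebraMap r => simp [Algebra.commutes]
  | ι w => rw [involute_ι, neg_mul, ← eq_neg_of_add_eq_zero_left (ι_add_mul_swap v w)]
  | mul a b iha ihb => rw [← mul_assoc, iha, mul_assoc, ihb, map_mul, mul_assoc]
  | add a b iha ihb => rw [mul_add, iha, ihb, map_add, add_mul]

theorem mem_center_of_mem_evenOdd_zero {x : ExteriorAlgebra R M}
    (hx : x ∈ evenOdd (0 : QuadraticForm R M) 0) :
    x ∈ Subalgebra.center R (ExteriorAlgebra R M) := by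
  induction x, hx using even_induction with
  | algebraMap r => exact Subalgebra.algebraMap_mem _ r
  | add a b _ _ iha ihb => exact add_mem iha ihb
  | ι_mul_ι_mul m₁ m₂ z _ ih =>
    refine mul_mem (Subalgebra.mem_center_iff.mpr fun y => ?_) ih
    rw [eq_comm, mul_assoc, ι_mul_eq_involute_mul m₂, ← mul_assoc, ι_mul_eq_involute_mul m₁,
      involute_involute, mul_assoc]

theorem mul_eq_neg_mul_of_mem_evenOdd_one {x y : ExteriorAlgebra R M}
    (hx : x ∈ evenOdd (0 : QuadraticForm R M) 1) (hy : y ∈ evenOdd (0 : QuadraticForm R M) 1) :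
    x * y = -(y * x) := by
  induction x, hx using odd_induction with
  | ι v => rw [ι_mul_eq_involute_mul, involute_eq_of_mem_odd hy, neg_mul]
  | add a b _ _ iha ihb => rw [add_mul, iha, ihb, mul_add, neg_add]
  | ι_mul_ι_mul m₁ m₂ z _ ih =>
    rw [mul_assoc, ih, mul_neg, ← mul_assoc,
      ← Subalgebra.mem_center_iff.mp
        (mem_center_of_mem_evenOdd_zero (ι_mul_ι_mem_evenOdd_zero _ m₁ m₂)) y, mul_assoc]

theorem mul_mem_evenOdd_zero_of_mem_evenOdd_one {x y : ExteriorAlgebra R M}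
    (hx : x ∈ evenOdd (0 : QuadraticForm R M) 1) (hy : y ∈ evenOdd (0 : QuadraticForm R M) 1) :
    x * y ∈ evenOdd (0 : QuadraticForm R M) 0 := by
  simpa [show (1 + 1 : ZMod 2) = 0 from rfl] using SetLike.mul_mem_graded hx hy

theorem mul_mul_mul_eq_neg_of_mem_evenOdd_one (p : ExteriorAlgebra R M)
    {q r s : ExteriorAlgebra R M} (hq : q ∈ evenOdd (0 : QuadraticForm R M) 1)
    (hr : r ∈ evenOdd (0 : QuadraticForm R M) 1) (hs : s ∈ evenOdd (0 : QuadraticForm R M) 1) :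
    p * q * (r * s) = -(p * s * (r * q)) := by
  have hqrs : q * (r * s) = r * s * q := by
    rw [← mul_assoc, mul_eq_neg_mul_of_mem_evenOdd_one hq hr, neg_mul, mul_assoc,
      mul_eq_neg_mul_of_mem_evenOdd_one hq hs, mul_neg, neg_neg, mul_assoc]
  rw [mul_assoc, hqrs, mul_eq_neg_mul_of_mem_evenOdd_one hr hs]
  noncomm_ring

theorem sum_perm_prod_odd_mul_odd_add_eq_zero (b c b' c' : Fin 3 → ExteriorAlgebra R M)
    (hb : ∀ i, b i ∈ evenOdd (0 : QuadraticForm R M) 1)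
    (hc : ∀ i, c i ∈ evenOdd (0 : QuadraticForm R M) 1)
    (hb' : ∀ i, b' i ∈ evenOdd (0 : QuadraticForm R M) 1)
    (hc' : ∀ i, c' i ∈ evenOdd (0 : QuadraticForm R M) 1) :
    ∑ σ : Perm (Fin 3),
      (b 0 * c (σ 0) + b' 0 * c' (σ 0)) * (b 1 * c (σ 1) + b' 1 * c' (σ 1)) *
        (b 2 * c (σ 2) + b' 2 * c' (σ 2)) = 0 := by
  let lift (f g : Fin 3 → ExteriorAlgebra R M) (hf : ∀ i, f i ∈ evenOdd (0 : QuadraticForm R M) 1)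
      (hg : ∀ i, g i ∈ evenOdd (0 : QuadraticForm R M) 1) (i j : Fin 3) :
      Subalgebra.center R (ExteriorAlgebra R M) :=
    ⟨f i * g j,
      mem_center_of_mem_evenOdd_zero (mul_mem_evenOdd_zero_of_mem_evenOdd_one (hf i) (hg j))⟩
  have exchange : ∀ f g hf hg (i k : Fin 3), i ≠ k → ∀ j l,
      lift f g hf hg i j * lift f g hf hg k l = -(lift f g hf hg i l * lift f g hf hg k j) :=
    fun f g hf hg i k _ j l => Subtype.ext (by
      simp only [lift, Subalgebra.coe_mul, Subalgebra.coe_neg]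
      exact mul_mul_mul_eq_neg_of_mem_evenOdd_one (f i) (hg j) (hf k) (hg l))
  have h := congrArg Subtype.val <| sum_perm_prod_add_eq_zero (by simp) _ _
    (exchange b c hb hc) (exchange b' c' hb' hc')
  simpa [Fin.prod_univ_three, lift] using h

end ExteriorAlgebra

theorem InW.mul_sub_mul_eq_scalar {F : Type*} [Field F]
    {u v : Matrix (Fin 2) (Fin 2) (GrAlg F)} (hu : InW u) (hv : InW v) :
    u * v - v * u = Matrix.scalar (Fin 2) (u 0 1 * v 1 0 + u 1 0 * v 0 1) := by
  obtain ⟨⟨hu₀₀, -, hu₀₁, hu₁₀⟩, hu_diag⟩ := hu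
  obtain ⟨⟨hv₀₀, -, hv₀₁, hv₁₀⟩, hv_diag⟩ := hv
  have comm_u (y) : u 0 0 * y = y * u 0 0 :=
    (Subalgebra.mem_center_iff.mp (ExteriorAlgebra.mem_center_of_mem_evenOdd_zero hu₀₀) y).symm
  have comm_v (y) : v 0 0 * y = y * v 0 0 :=
    (Subalgebra.mem_center_iff.mp (ExteriorAlgebra.mem_center_of_mem_evenOdd_zero hv₀₀) y).symm
  have anti_vu := ExteriorAlgebra.mul_eq_neg_mul_of_mem_evenOdd_one hv₀₁ hu₁₀
  have anti_vu' := ExteriorAlgebra.mul_eq_neg_mul_of_mem_evenOdd_one hv₁₀ hu₀₁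
  ext i j
  fin_cases i <;> fin_cases j <;> simp [Matrix.mul_apply, ← hu_diag, ← hv_diag]
  · rw [comm_u, anti_vu]; abel
  · rw [comm_u, comm_v]; abel
  · rw [comm_u, comm_v]; abel
  · rw [comm_u, anti_vu', add_comm (u 1 0 * _)]; abel

theorem linearization_relation_general (F : Type*) [Field F]
    (wa wb : Fin 3 → Matrix (Fin 2) (Fin 2) (GrAlg F))
    (ha : ∀ i, InW (wa i)) (hb : ∀ i, InW (wb i)) :
    ∑ σ : Equiv.Perm (Fin 3),
      (wa 0 * wb (σ 0) - wb (σ 0) * wa 0) *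
      (wa 1 * wb (σ 1) - wb (σ 1) * wa 1) *
      (wa 2 * wb (σ 2) - wb (σ 2) * wa 2) = 0 := by
  have hcomm : ∀ i j, wa i * wb j - wb j * wa i =
      Matrix.scalar (Fin 2) (wa i 0 1 * wb j 1 0 + wa i 1 0 * wb j 0 1) :=
    fun i j => (ha i).mul_sub_mul_eq_scalar (hb j)
  simp only [hcomm, ← map_mul, ← map_sum]
  rw [ExteriorAlgebra.sum_perm_prod_odd_mul_odd_add_eq_zero _ _ _ _ (fun i => (ha i).1.2.2.1)
    (fun j => (hb j).1.2.2.2) (fun i => (ha i).1.2.2.2) (fun j => (hb j).1.2.2.1), map_zero]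

/-- partial linearization relation: for supertraceless matrices
`w_{a₁}, w_{a₂}, w_{a₃}, w_{b₁}, w_{b₂}, w_{b₃} ∈ W`,
`Σ_{σ ∈ S₃} [w_{a₁}, w_{b_{σ(1)}}][w_{a₂}, w_{b_{σ(2)}}][w_{a₃}, w_{b_{σ(3)}}] = 0`. -/
theorem linearization_relation (F : Type*) [Field F] [Infinite F]
    (h2 : (2 : F) ≠ 0)
    (wa wb : Fin 3 → Matrix (Fin 2) (Fin 2) (GrAlg F))
    (ha : ∀ i, InW (wa i)) (hb : ∀ i, InW (wb i)) :
    ∑ σ : Equiv.Perm (Fin 3),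
      (wa 0 * wb (σ 0) - wb (σ 0) * wa 0) *
      (wa 1 * wb (σ 1) - wb (σ 1) * wa 1) *
      (wa 2 * wb (σ 2) - wb (σ 2) * wa 2) = 0 :=
  linearization_relation_general F wa wb ha hb
end
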